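/- arXiv:0908.3084 — 3 statements merged into one kernel-verified Lean document; each statement's English description precedes it below -/
import Mathlib

section
/- Let X be a G-simplicial set, π̲ an O_G-group, τ : ΦX → π̲ an O_G-twisting function, and (M, φ) a π̲-module. Then the twisted coboundary δ_τ : C_G^n(X;M) → C_G^{n+1}(X;M), given by (δ_τ f)(G/H)(x) = (τ(G/H)_{n+1}(x))⁻¹·f(G/H)(∂₀x) + Σ_{i=1}^{n+1} (−1)ⁱ f(G/H)(∂ᵢx), satisfies δ_τ ∘ δ_τ = 0, so (C_G^*(X;M), δ_τ) is a cochain complex. -/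
universe u

/-- A combinatorial presentation of a simplicial set: a graded family of types
together with face operators `δ n i : obj (n+1) → obj n` and degeneracy operators
`σ n i : obj n → obj (n+1)` (defined for all `i : ℕ`; the simplicial identities are
only required for indices in the valid range). -/
structure SData : Type (u+1) where
  obj : ℕ → Type u
  δ : (n : ℕ) → ℕ → obj (n+1) → obj n
  σ : (n : ℕ) → ℕ → obj n → obj (n+1)

namespace SData

/-- The simplicial identities. -/
structure IsSimplicial (X : SData.{u}) : Prop where
  δδ : ∀ (n i j : ℕ), i < j → j ≤ n + 2 → ∀ x : X.obj (n+2),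
    X.δ n i (X.δ (n+1) j x) = X.δ n (j-1) (X.δ (n+1) i x)
  σσ : ∀ (n i j : ℕ), i ≤ j → j ≤ n → ∀ x : X.obj n,
    X.σ (n+1) i (X.σ n j x) = X.σ (n+1) (j+1) (X.σ n i x)
  δσ_lt : ∀ (n i j : ℕ), i < j → j ≤ n + 1 → ∀ x : X.obj (n+1),
    X.δ (n+1) i (X.σ (n+1) j x) = X.σ n (j-1) (X.δ n i x)
  δσ_self : ∀ (n j : ℕ), j ≤ n → ∀ x : X.obj n, X.δ n j (X.σ n j x) = x
  δσ_succ : ∀ (n j : ℕ), j ≤ n → ∀ x : X.obj n, X.δ n (j+1) (X.σ n j x) = x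
  δσ_gt : ∀ (n i j : ℕ), j + 1 < i → i ≤ n + 2 → ∀ x : X.obj (n+1),
    X.δ (n+1) i (X.σ (n+1) j x) = X.σ n j (X.δ n (i-1) x)

/-- A simplex `x ∈ X_{n+1}` is degenerate if it is in the image of some degeneracy. -/
def Degenerate (X : SData.{u}) {n : ℕ} (x : X.obj (n+1)) : Prop :=
  ∃ i ≤ n, ∃ y : X.obj n, x = X.σ n i y

/-- Nondegeneracy (every `0`-simplex is nondegenerate). -/
def NonDeg (X : SData.{u}) : ∀ {n : ℕ}, X.obj n → Prop
  | 0, _ => True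
  | _+1, x => ¬ X.Degenerate x

end SData

/-- A simplicial group structure: the underlying simplicial identities hold and all
face and degeneracy operators are group homomorphisms. -/
structure IsSGrp (Γ : SData.{u}) [∀ n, Group (Γ.obj n)] : Prop where
  simp : Γ.IsSimplicial
  δ_mul : ∀ (n i : ℕ) (g h : Γ.obj (n+1)), Γ.δ n i (g * h) = Γ.δ n i g * Γ.δ n i h
  σ_mul : ∀ (n i : ℕ) (g h : Γ.obj n), Γ.σ n i (g * h) = Γ.σ n i g * Γ.σ n i h

/-- The Moore/Cartan twisting-function identities for a graded function
`τ : B_q → Γ_{q-1}` (here `τ q : B.obj (q+1) → Γ.obj q`). -/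
structure IsTwisting (B Γ : SData.{u}) [∀ n, Group (Γ.obj n)]
    (τ : ∀ q, B.obj (q+1) → Γ.obj q) : Prop where
  d0 : ∀ (q : ℕ) (b : B.obj (q+2)),
    Γ.δ q 0 (τ (q+1) b) = (τ q (B.δ (q+1) 0 b))⁻¹ * τ q (B.δ (q+1) 1 b)
  di : ∀ (q i : ℕ), 0 < i → i ≤ q + 1 → ∀ b : B.obj (q+2),
    Γ.δ q i (τ (q+1) b) = τ q (B.δ (q+1) (i+1) b)
  si : ∀ (q i : ℕ), i ≤ q → ∀ b : B.obj (q+1),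
    Γ.σ q i (τ q b) = τ (q+1) (B.σ (q+1) (i+1) b)
  s0 : ∀ (q : ℕ) (b : B.obj q), τ q (B.σ q 0 b) = 1

/-- A group `π` regarded as a constant simplicial object. -/
abbrev constS (π : Type u) : SData.{u} where
  obj _ := π
  δ _ _ x := x
  σ _ _ x := x

/-- A left simplicial action of a simplicial group `Γ` on `F`. -/
structure IsSimplicialAction (F Γ : SData.{u}) [∀ n, Group (Γ.obj n)]
    (act : ∀ n, Γ.obj n → F.obj n → F.obj n) : Prop where
  one_act : ∀ (n : ℕ) (f : F.obj n), act n 1 f = f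
  mul_act : ∀ (n : ℕ) (g h : Γ.obj n) (f : F.obj n), act n (g * h) f = act n g (act n h f)
  act_δ : ∀ (n i : ℕ), i ≤ n + 1 → ∀ (g : Γ.obj (n+1)) (f : F.obj (n+1)),
    F.δ n i (act (n+1) g f) = act n (Γ.δ n i g) (F.δ n i f)
  act_σ : ∀ (n i : ℕ), i ≤ n → ∀ (g : Γ.obj n) (f : F.obj n),
    F.σ n i (act n g f) = act (n+1) (Γ.σ n i g) (F.σ n i f)

/-- The twisted cartesian product `F ×_τ B`. -/
def TCP (F B Γ : SData.{u}) (act : ∀ n, Γ.obj n → F.obj n → F.obj n)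
    (τ : ∀ q, B.obj (q+1) → Γ.obj q) : SData.{u} where
  obj n := F.obj n × B.obj n
  δ n i p :=
    if i = 0 then (act n (τ n p.2) (F.δ n 0 p.1), B.δ n 0 p.2)
    else (F.δ n i p.1, B.δ n i p.2)
  σ n i p := (F.σ n i p.1, B.σ n i p.2)

/-- The classifying complex `W̄π` of a group `π`: `q`-simplices are `q`-tuples
`[x₁, …, x_q]` of elements of `π`. -/
def Wbar (π : Type u) [Group π] : SData.{u} where
  obj q := Fin q → π
  δ q i x := fun j =>
    if i = 0 then x j.succ
    else if (j : ℕ) + 1 < i then x j.castSucc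
    else if (j : ℕ) + 1 = i then x j.castSucc * x j.succ
    else x j.succ
  σ q i x := fun j =>
    if h : (j : ℕ) < i ∧ (j : ℕ) < q then x ⟨j, h.2⟩
    else if (j : ℕ) = i then 1
    else if h2 : 1 ≤ (j : ℕ) ∧ (j : ℕ) ≤ q then x ⟨(j : ℕ) - 1, by omega⟩
    else 1

/-- The canonical twisting function `τ(π) : W̄π → π`, `[x₁,…,x_q] ↦ x₁`. -/
def tauW (π : Type u) [Group π] : ∀ q, (Wbar π).obj (q+1) → π := fun _ x => x 0

/-- The simplicial map `θ(τ) : B → W̄π` associated to a twisting function `τ` with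
values in a (constant) group `π`:
`θ(τ)(x) = [τ(x), τ(∂₀x), …, τ(∂₀^{q-1}x)]`. -/
def thetaF (B : SData.{u}) (π : Type u) [Group π] (τ : ∀ q, B.obj (q+1) → π) :
    ∀ q, B.obj q → (Wbar π).obj q
  | 0, _ => Fin.elim0
  | q+1, x => Fin.cons (τ q x) (thetaF B π τ q (B.δ q 0 x))

/-- Compatibility of a family of candidate horn faces. -/
def HornCompatible (X : SData.{u}) (m k : ℕ) (y : ℕ → X.obj (m+1)) : Prop :=
  ∀ i j : ℕ, i < j → j ≤ m + 2 → i ≠ k → j ≠ k →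
    X.δ m i (y j) = X.δ m (j-1) (y i)

/-- The Kan extension condition. -/
def IsKanComplex (X : SData.{u}) : Prop :=
  (∀ k ≤ 1, ∀ y : X.obj 0, ∃ x : X.obj 1, X.δ 0 (1 - k) x = y) ∧
  (∀ (m k : ℕ), k ≤ m + 2 → ∀ y : ℕ → X.obj (m+1), HornCompatible X m k y →
    ∃ x : X.obj (m+2), ∀ i ≤ m + 2, i ≠ k → X.δ (m+1) i x = y i)

/-- The Kan fibration condition for a levelwise map `p : E → B`. -/
def IsKanFibration (E B : SData.{u}) (p : ∀ n, E.obj n → B.obj n) : Prop :=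
  (∀ k ≤ 1, ∀ (y : E.obj 0) (b : B.obj 1), p 0 y = B.δ 0 (1 - k) b →
    ∃ x : E.obj 1, p 1 x = b ∧ E.δ 0 (1 - k) x = y) ∧
  (∀ (m k : ℕ), k ≤ m + 2 → ∀ (y : ℕ → E.obj (m+1)) (b : B.obj (m+2)),
    HornCompatible E m k y → (∀ i ≤ m + 2, i ≠ k → p (m+1) (y i) = B.δ (m+1) i b) →
    ∃ x : E.obj (m+2), p (m+2) x = b ∧ ∀ i ≤ m + 2, i ≠ k → E.δ (m+1) i x = y i)

/-- A levelwise map of `SData`s is simplicial if it commutes with all faces and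
degeneracies (in the valid range). -/
def IsSimplicialMap (X Y : SData.{u}) (f : ∀ n, X.obj n → Y.obj n) : Prop :=
  (∀ (n i : ℕ), i ≤ n + 1 → ∀ x : X.obj (n+1), f n (X.δ n i x) = Y.δ n i (f (n+1) x)) ∧
  (∀ (n i : ℕ), i ≤ n → ∀ x : X.obj n, f (n+1) (X.σ n i x) = Y.σ n i (f n x))

/-! ### `G`-simplicial sets and the orbit category -/

/-- The subconjugacy relation `g⁻¹Hg ⊆ K`, which determines the morphism
`ĝ : G/H → G/K` of the orbit category `O_G`. -/
def SubConj {G : Type v} [Group G] (g : G) (H K : Subgroup G) : Prop :=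
  ∀ h ∈ H, g⁻¹ * h * g ∈ K

lemma SubConj.one {G : Type v} [Group G] (H : Subgroup G) : SubConj (1 : G) H H := by
  intro h hh; simpa using hh

lemma SubConj.comp {G : Type v} [Group G] {g k : G} {H K L : Subgroup G}
    (hg : SubConj g H K) (hk : SubConj k K L) : SubConj (g * k) H L := by
  intro h hh
  have h2 := hk _ (hg h hh)
  rwa [show (g * k)⁻¹ * h * (g * k) = k⁻¹ * (g⁻¹ * h * g) * k by group]

/-- A `G`-simplicial set: a simplicial set together with a simplicial `G`-action. -/
structure GSData (G : Type u) [Group G] : Type (u+1) where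
  X : SData.{u}
  simp : X.IsSimplicial
  act : ∀ n, G → X.obj n → X.obj n
  one_act : ∀ (n : ℕ) (x : X.obj n), act n 1 x = x
  mul_act : ∀ (n : ℕ) (g h : G) (x : X.obj n), act n (g * h) x = act n g (act n h x)
  act_δ : ∀ (n i : ℕ) (g : G) (x : X.obj (n+1)), X.δ n i (act (n+1) g x) = act n g (X.δ n i x)
  act_σ : ∀ (n i : ℕ) (g : G) (x : X.obj n), X.σ n i (act n g x) = act (n+1) g (X.σ n i x)

namespace GSData

variable {G : Type u} [Group G]

/-- The fixed point subcomplex `X^H`. -/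
def Fixed (Y : GSData G) (H : Subgroup G) : SData.{u} where
  obj n := {x : Y.X.obj n // ∀ h ∈ H, Y.act n h x = x}
  δ n i x := ⟨Y.X.δ n i x.1, fun h hh => by rw [← Y.act_δ, x.2 h hh]⟩
  σ n i x := ⟨Y.X.σ n i x.1, fun h hh => by rw [← Y.act_σ, x.2 h hh]⟩

/-- The simplicial map `X^K → X^H`, `x ↦ gx`, induced by a subconjugacy relation
`g⁻¹Hg ⊆ K` (i.e. by the morphism `ĝ : G/H → G/K` of `O_G`). -/
def fmap (Y : GSData G) {H K : Subgroup G} (g : G) (hg : SubConj g H K) (n : ℕ) :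
    (Y.Fixed K).obj n → (Y.Fixed H).obj n := fun x =>
  ⟨Y.act n g x.1, fun h hh => by
    rw [← Y.mul_act, show h * g = g * (g⁻¹ * h * g) by group, Y.mul_act,
      x.2 _ (hg h hh)]⟩

end GSData

/-- A (contravariant) `O_G`-group: `G/H ↦ π(G/H)`, with a map `π(G/K) → π(G/H)` for
every subconjugacy relation `g⁻¹Hg ⊆ K`. -/
structure OGGrp (G : Type u) [Group G] : Type (u+1) where
  obj : Subgroup G → Type u
  grp : ∀ H, Group (obj H)
  map : ∀ (H K : Subgroup G) (g : G), SubConj g H K → obj K → obj H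

attribute [instance] OGGrp.grp

/-- An abelian `O_G`-group. -/
structure OGAb (G : Type u) [Group G] : Type (u+1) where
  obj : Subgroup G → Type u
  ab : ∀ H, AddCommGroup (obj H)
  map : ∀ (H K : Subgroup G) (g : G), SubConj g H K → obj K → obj H

attribute [instance] OGAb.ab

variable {G : Type u} [Group G]

/-- The twisted coboundary
`(δ_τ f)(G/H)(x) = (τ(G/H)(x))⁻¹ · f(G/H)(∂₀x) + Σ_{i=1}^{n+1} (-1)ⁱ f(G/H)(∂ᵢx)`. -/
def dtau (Y : GSData G) (π : OGGrp G) (M : OGAb G)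
    (φ : ∀ H, π.obj H → M.obj H → M.obj H)
    (τ : ∀ (H : Subgroup G) q, (Y.Fixed H).obj (q+1) → π.obj H) (n : ℕ)
    (f : ∀ H : Subgroup G, (Y.Fixed H).obj n → M.obj H) :
    ∀ H : Subgroup G, (Y.Fixed H).obj (n+1) → M.obj H := fun H x =>
  φ H (τ H n x)⁻¹ (f H ((Y.Fixed H).δ n 0 x)) +
    ∑ i ∈ Finset.range (n+1), ((-1 : ℤ)^(i+1)) • f H ((Y.Fixed H).δ n (i+1) x)

section Aux

variable (Y : GSData G)

lemma fixed_isSimplicial (H : Subgroup G) : (Y.Fixed H).IsSimplicial where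
  δδ n i j h1 h2 x := Subtype.ext (Y.simp.δδ n i j h1 h2 x.1)
  σσ n i j h1 h2 x := Subtype.ext (Y.simp.σσ n i j h1 h2 x.1)
  δσ_lt n i j h1 h2 x := Subtype.ext (Y.simp.δσ_lt n i j h1 h2 x.1)
  δσ_self n j h x := Subtype.ext (Y.simp.δσ_self n j h x.1)
  δσ_succ n j h x := Subtype.ext (Y.simp.δσ_succ n j h x.1)
  δσ_gt n i j h1 h2 x := Subtype.ext (Y.simp.δσ_gt n i j h1 h2 x.1)

lemma fmap_δ' {H K : Subgroup G} (g : G) (hg : SubConj g H K) (m i : ℕ)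
    (x : (Y.Fixed K).obj (m+1)) :
    (Y.Fixed H).δ m i (Y.fmap g hg (m+1) x) = Y.fmap g hg m ((Y.Fixed K).δ m i x) :=
  Subtype.ext (Y.act_δ m i g x.1)

lemma map_one_of_mul {A B : Type*} [Group A] [Group B] (F : A → B)
    (h : ∀ u v, F (u * v) = F u * F v) : F 1 = 1 := by
  have := h 1 1
  rw [one_mul] at this
  exact (left_eq_mul.mp this)

lemma map_inv_of_mul {A B : Type*} [Group A] [Group B] (F : A → B)
    (h : ∀ u v, F (u * v) = F u * F v) (u : A) : F u⁻¹ = (F u)⁻¹ := by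
  have h1 : F u⁻¹ * F u = 1 := by rw [← h, inv_mul_cancel, map_one_of_mul F h]
  exact eq_inv_of_mul_eq_one_left h1

end Aux

/-- Let `X` be a `G`-simplicial set, `π̲` an `O_G`-group,
`τ : ΦX → π̲` an `O_G`-twisting function and `(M,φ)` a `π̲`-module.  Then the twisted
coboundary `δ_τ` satisfies `δ_τ ∘ δ_τ = 0`; moreover `δ_τ` preserves naturality in `G/H`
and vanishing on degenerate simplices, so `(C_G^*(X;M), δ_τ)` is a cochain complex. -/
theorem dtau_squared_eq_zero (Y : GSData G) (π : OGGrp G) (M : OGAb G)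
    (φ : ∀ H, π.obj H → M.obj H → M.obj H)
    (hφ_one : ∀ H m, φ H 1 m = m)
    (hφ_mul : ∀ H u v m, φ H (u * v) m = φ H u (φ H v m))
    (hφ_add : ∀ H u m m', φ H u (m + m') = φ H u m + φ H u m')
    (hπ_mul : ∀ (H K : Subgroup G) (g : G) (hg : SubConj g H K) (u v : π.obj K),
      π.map H K g hg (u * v) = π.map H K g hg u * π.map H K g hg v)
    (hM_add : ∀ (H K : Subgroup G) (g : G) (hg : SubConj g H K) (m m' : M.obj K),
      M.map H K g hg (m + m') = M.map H K g hg m + M.map H K g hg m')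
    (hMφ : ∀ (H K : Subgroup G) (g : G) (hg : SubConj g H K) (v : π.obj K) (m : M.obj K),
      M.map H K g hg (φ K v m) = φ H (π.map H K g hg v) (M.map H K g hg m))
    (τ : ∀ (H : Subgroup G) q, (Y.Fixed H).obj (q+1) → π.obj H)
    (hτ : ∀ H : Subgroup G,
      @IsTwisting (Y.Fixed H) (constS (π.obj H)) (fun _ => inferInstanceAs (Group (π.obj H))) (τ H))
    (hτnat : ∀ (H K : Subgroup G) (g : G) (hg : SubConj g H K) (q : ℕ)
      (x : (Y.Fixed K).obj (q+1)),
      τ H q (Y.fmap g hg (q+1) x) = π.map H K g hg (τ K q x))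
    (n : ℕ) (f : ∀ H : Subgroup G, (Y.Fixed H).obj n → M.obj H)
    (hf_nat : ∀ (H K : Subgroup G) (g : G) (hg : SubConj g H K) (x : (Y.Fixed K).obj n),
      f H (Y.fmap g hg n x) = M.map H K g hg (f K x))
    (hf_deg : ∀ (H : Subgroup G) (m : ℕ) (hm : n = m + 1) (x : (Y.Fixed H).obj (m+1)),
      (Y.Fixed H).Degenerate x → f H (hm ▸ x) = 0) :
    (∀ (H : Subgroup G) (x : (Y.Fixed H).obj (n+2)),
      dtau Y π M φ τ (n+1) (dtau Y π M φ τ n f) H x = 0) ∧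
    (∀ (H K : Subgroup G) (g : G) (hg : SubConj g H K) (x : (Y.Fixed K).obj (n+1)),
      dtau Y π M φ τ n f H (Y.fmap g hg (n+1) x) = M.map H K g hg (dtau Y π M φ τ n f K x)) ∧
    (∀ (H : Subgroup G) (x : (Y.Fixed H).obj (n+1)),
      (Y.Fixed H).Degenerate x → dtau Y π M φ τ n f H x = 0) := by
  classical
  have hφ_zero : ∀ (H : Subgroup G) (u : π.obj H), φ H u (0 : M.obj H) = 0 := by
    intro H u
    have h := hφ_add H u 0 0
    rw [add_zero] at h
    exact (left_eq_add.mp h)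
  have hφ_smul : ∀ (H : Subgroup G) (u : π.obj H) (k : ℤ) (m : M.obj H),
      φ H u (k • m) = k • φ H u m := fun H u k m =>
    map_zsmul (AddMonoidHom.mk' (φ H u) (hφ_add H u)) k m
  have hφ_sum : ∀ (H : Subgroup G) (u : π.obj H) (m : ℕ) (F : ℕ → M.obj H),
      φ H u (∑ i ∈ Finset.range m, F i) = ∑ i ∈ Finset.range m, φ H u (F i) :=
    fun H u m F => map_sum (AddMonoidHom.mk' (φ H u) (hφ_add H u)) F (Finset.range m)
  refine ⟨?_, ?_, ?_⟩
  · -- δτ ∘ δτ = 0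
    intro H x
    have S := fixed_isSimplicial Y H
    have h1 : τ H n ((Y.Fixed H).δ (n+1) 1 x)
        = τ H n ((Y.Fixed H).δ (n+1) 0 x) * τ H (n+1) x := by
      have hd : τ H (n+1) x = (τ H n ((Y.Fixed H).δ (n+1) 0 x))⁻¹ *
          τ H n ((Y.Fixed H).δ (n+1) 1 x) := (hτ H).d0 n x
      rw [hd, mul_inv_cancel_left]
    have hdi : ∀ i, 0 < i → i ≤ n+1 →
        τ H n ((Y.Fixed H).δ (n+1) (i+1) x) = τ H (n+1) x := by
      intro i hi1 hi2
      have hd : τ H (n+1) x = τ H n ((Y.Fixed H).δ (n+1) (i+1) x) :=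
        (hτ H).di n i hi1 hi2 x
      exact hd.symm
    have hP0 : φ H (τ H n ((Y.Fixed H).δ (n+1) 1 x))⁻¹
          (f H ((Y.Fixed H).δ n 0 ((Y.Fixed H).δ (n+1) 1 x)))
        = φ H (τ H (n+1) x)⁻¹ (φ H (τ H n ((Y.Fixed H).δ (n+1) 0 x))⁻¹
            (f H ((Y.Fixed H).δ n 0 ((Y.Fixed H).δ (n+1) 0 x)))) := by
      have e : (Y.Fixed H).δ n 0 ((Y.Fixed H).δ (n+1) 1 x)
          = (Y.Fixed H).δ n 0 ((Y.Fixed H).δ (n+1) 0 x) := by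
        have := S.δδ n 0 1 (by omega) (by omega) x
        simpa using this
      rw [e, h1, mul_inv_rev, hφ_mul]
    have key2' : ∑ p ∈ Finset.range (n+1+1) ×ˢ Finset.range (n+1),
        ((-1:ℤ)^(p.1+p.2)) •
          f H ((Y.Fixed H).δ n (p.2+1) ((Y.Fixed H).δ (n+1) (p.1+1) x)) = 0 := by
      refine Finset.sum_involution
        (fun p _ => if p.2 < p.1 then (p.2, p.1 - 1) else (p.2 + 1, p.1)) ?_ ?_ ?_ ?_
      · rintro ⟨i, j⟩ hp
        simp only [Finset.mem_product, Finset.mem_range] at hp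
        by_cases h : j < i
        · simp only [if_pos h]
          have e : (Y.Fixed H).δ n (j+1) ((Y.Fixed H).δ (n+1) (i+1) x)
              = (Y.Fixed H).δ n ((i+1)-1) ((Y.Fixed H).δ (n+1) (j+1) x) :=
            S.δδ n (j+1) (i+1) (by omega) (by omega) x
          simp only [Nat.add_sub_cancel] at e
          have e2 : (i-1)+1 = i := by omega
          rw [e2, e]
          have e4 : (-1:ℤ)^(j+(i-1)) = -(-1:ℤ)^(i+j) := by
            rw [show i+j = (j+(i-1))+1 by omega, pow_succ]
            ring
          rw [e4, neg_smul, add_neg_cancel]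
        · simp only [if_neg h]
          have e : (Y.Fixed H).δ n (i+1) ((Y.Fixed H).δ (n+1) (j+1+1) x)
              = (Y.Fixed H).δ n ((j+1+1)-1) ((Y.Fixed H).δ (n+1) (i+1) x) :=
            S.δδ n (i+1) (j+1+1) (by omega) (by omega) x
          simp only [Nat.add_sub_cancel] at e
          rw [e]
          have e4 : (-1:ℤ)^(j+1+i) = -(-1:ℤ)^(i+j) := by
            rw [show j+1+i = (i+j)+1 by omega, pow_succ]
            ring
          rw [e4, neg_smul, add_neg_cancel]
      · rintro ⟨i, j⟩ _ _
        by_cases h : j < i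
        · simp only [if_pos h, ne_eq, Prod.mk.injEq, not_and]
          omega
        · simp only [if_neg h, ne_eq, Prod.mk.injEq, not_and]
          omega
      · rintro ⟨i, j⟩ hp
        simp only [Finset.mem_product, Finset.mem_range] at hp
        by_cases h : j < i
        · simp only [if_pos h, Finset.mem_product, Finset.mem_range]
          exact ⟨by omega, by omega⟩
        · simp only [if_neg h, Finset.mem_product, Finset.mem_range]
          exact ⟨by omega, by omega⟩
      · rintro ⟨i, j⟩ hp
        by_cases h : j < i
        · simp only [if_pos h]
          have h2 : ¬ (i - 1 < j) := by omega
          simp only [if_neg h2]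
          have e : i - 1 + 1 = i := by omega
          rw [e]
        · simp only [if_neg h]
          have h2 : i < j + 1 := by omega
          simp only [if_pos h2, Nat.add_sub_cancel]
    have key2 : ∑ i ∈ Finset.range (n+1+1), ((-1:ℤ)^(i+1)) •
        ∑ j ∈ Finset.range (n+1), ((-1:ℤ)^(j+1)) •
          f H ((Y.Fixed H).δ n (j+1) ((Y.Fixed H).δ (n+1) (i+1) x)) = 0 := by
      rw [← key2', Finset.sum_product]
      refine Finset.sum_congr rfl fun i _ => ?_
      rw [Finset.smul_sum]
      refine Finset.sum_congr rfl fun j _ => ?_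
      dsimp only
      rw [smul_smul, ← pow_add, show (i+1)+(j+1) = (i+j)+2 by omega, pow_add]
      norm_num
    have key1 : ∑ i ∈ Finset.range (n+1+1), ((-1:ℤ)^(i+1)) •
          φ H (τ H n ((Y.Fixed H).δ (n+1) (i+1) x))⁻¹
            (f H ((Y.Fixed H).δ n 0 ((Y.Fixed H).δ (n+1) (i+1) x)))
        = - φ H (τ H (n+1) x)⁻¹ (φ H (τ H n ((Y.Fixed H).δ (n+1) 0 x))⁻¹
              (f H ((Y.Fixed H).δ n 0 ((Y.Fixed H).δ (n+1) 0 x))))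
          - ∑ j ∈ Finset.range (n+1), ((-1:ℤ)^(j+1)) •
              φ H (τ H (n+1) x)⁻¹
                (f H ((Y.Fixed H).δ n (j+1) ((Y.Fixed H).δ (n+1) 0 x))) := by
      rw [Finset.sum_range_succ']
      have hGi : ∀ i ∈ Finset.range (n+1), ((-1:ℤ)^(i+1+1)) •
            φ H (τ H n ((Y.Fixed H).δ (n+1) (i+1+1) x))⁻¹
              (f H ((Y.Fixed H).δ n 0 ((Y.Fixed H).δ (n+1) (i+1+1) x)))
          = - (((-1:ℤ)^(i+1)) • φ H (τ H (n+1) x)⁻¹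
              (f H ((Y.Fixed H).δ n (i+1) ((Y.Fixed H).δ (n+1) 0 x)))) := by
        intro i hi
        simp only [Finset.mem_range] at hi
        have hface : (Y.Fixed H).δ n 0 ((Y.Fixed H).δ (n+1) (i+1+1) x)
            = (Y.Fixed H).δ n (i+1) ((Y.Fixed H).δ (n+1) 0 x) := by
          have := S.δδ n 0 (i+1+1) (by omega) (by omega) x
          simpa using this
        rw [hface, hdi (i+1) (by omega) (by omega), pow_succ, mul_neg_one, neg_smul]
      rw [Finset.sum_congr rfl hGi]
      norm_num [hP0]
      abel
    simp only [dtau]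
    rw [hφ_add, hφ_sum]
    simp only [hφ_smul, smul_add]
    rw [Finset.sum_add_distrib, key1, key2]
    abel
  · -- naturality
    intro H K g hg x
    have hρ_smul : ∀ (k : ℤ) (m : M.obj K),
        M.map H K g hg (k • m) = k • M.map H K g hg m := fun k m =>
      map_zsmul (AddMonoidHom.mk' (M.map H K g hg) (hM_add H K g hg)) k m
    have hρ_sum : ∀ (m : ℕ) (F : ℕ → M.obj K),
        M.map H K g hg (∑ i ∈ Finset.range m, F i)
          = ∑ i ∈ Finset.range m, M.map H K g hg (F i) := fun m F =>
      map_sum (AddMonoidHom.mk' (M.map H K g hg) (hM_add H K g hg)) F (Finset.range m)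
    have hδ : ∀ i, (Y.Fixed H).δ n i (Y.fmap g hg (n+1) x)
        = Y.fmap g hg n ((Y.Fixed K).δ n i x) := fun i => fmap_δ' Y g hg n i x
    simp only [dtau]
    rw [hM_add, hρ_sum, hτnat, hδ 0, hf_nat,
      ← map_inv_of_mul _ (hπ_mul H K g hg), ← hMφ]
    congr 1
    refine Finset.sum_congr rfl fun i _ => ?_
    rw [hδ (i+1), hf_nat, hρ_smul]
  · -- vanishing on degenerates
    rintro H x ⟨j, hj, y, rfl⟩
    have S := fixed_isSimplicial Y H
    simp only [dtau]
    rcases Nat.eq_zero_or_pos j with rfl | hjpos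
    · -- j = 0
      have ht : τ H n ((Y.Fixed H).σ n 0 y) = 1 := (hτ H).s0 n y
      have h0 : (Y.Fixed H).δ n 0 ((Y.Fixed H).σ n 0 y) = y :=
        S.δσ_self n 0 (Nat.zero_le _) y
      have h1 : (Y.Fixed H).δ n (0+1) ((Y.Fixed H).σ n 0 y) = y :=
        S.δσ_succ n 0 (Nat.zero_le _) y
      have hsum : ∀ i ∈ Finset.range (n+1), ((-1:ℤ)^(i+1)) •
            f H ((Y.Fixed H).δ n (i+1) ((Y.Fixed H).σ n 0 y))
          = if i = 0 then - f H y else 0 := by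
        intro i hi
        simp only [Finset.mem_range] at hi
        rcases Nat.eq_zero_or_pos i with rfl | hipos
        · rw [if_pos rfl, h1]
          norm_num
        · rw [if_neg (by omega)]
          obtain ⟨m, rfl⟩ : ∃ m, n = m + 1 := ⟨n - 1, by omega⟩
          have hface : (Y.Fixed H).δ (m+1) (i+1) ((Y.Fixed H).σ (m+1) 0 y)
              = (Y.Fixed H).σ m 0 ((Y.Fixed H).δ m ((i+1)-1) y) :=
            S.δσ_gt m (i+1) 0 (by omega) (by omega) y
          simp only [Nat.add_sub_cancel] at hface
          have hz : f H ((Y.Fixed H).σ m 0 ((Y.Fixed H).δ m i y)) = 0 :=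
            hf_deg H m rfl _ ⟨0, Nat.zero_le _, _, rfl⟩
          rw [hface, hz, smul_zero]
      rw [Finset.sum_congr rfl hsum, Finset.sum_ite_eq' (Finset.range (n+1)) 0
        (fun _ => - f H y)]
      rw [if_pos (by simp), ht, inv_one, hφ_one, h0, add_neg_cancel]
    · -- j ≥ 1
      obtain ⟨j', rfl⟩ : ∃ j'', j = j'' + 1 := ⟨j - 1, by omega⟩
      obtain ⟨m, rfl⟩ : ∃ m, n = m + 1 := ⟨n - 1, by omega⟩
      have hj' : j' ≤ m := by omega
      have hd0 : (Y.Fixed H).δ (m+1) 0 ((Y.Fixed H).σ (m+1) (j'+1) y)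
          = (Y.Fixed H).σ m ((j'+1)-1) ((Y.Fixed H).δ m 0 y) :=
        S.δσ_lt m 0 (j'+1) (by omega) (by omega) y
      simp only [Nat.add_sub_cancel] at hd0
      have hz0 : f H ((Y.Fixed H).σ m j' ((Y.Fixed H).δ m 0 y)) = 0 :=
        hf_deg H m rfl _ ⟨j', hj', _, rfl⟩
      have hsum : ∀ i ∈ Finset.range (m+1+1), ((-1:ℤ)^(i+1)) •
            f H ((Y.Fixed H).δ (m+1) (i+1) ((Y.Fixed H).σ (m+1) (j'+1) y))
          = (if i = j' then ((-1:ℤ)^(j'+1)) • f H y else 0)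
            + (if i = j'+1 then ((-1:ℤ)^(j'+1+1)) • f H y else 0) := by
        intro i hi
        simp only [Finset.mem_range] at hi
        rcases lt_trichotomy i j' with hlt | heq | hgt
        · rw [if_neg (by omega), if_neg (by omega), add_zero]
          have hface : (Y.Fixed H).δ (m+1) (i+1) ((Y.Fixed H).σ (m+1) (j'+1) y)
              = (Y.Fixed H).σ m ((j'+1)-1) ((Y.Fixed H).δ m (i+1) y) :=
            S.δσ_lt m (i+1) (j'+1) (by omega) (by omega) y
          simp only [Nat.add_sub_cancel] at hface
          have hz : f H ((Y.Fixed H).σ m j' ((Y.Fixed H).δ m (i+1) y)) = 0 :=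
            hf_deg H m rfl _ ⟨j', hj', _, rfl⟩
          rw [hface, hz, smul_zero]
        · rw [heq, if_pos rfl, if_neg (by omega), add_zero,
            S.δσ_self (m+1) (j'+1) (by omega) y]
        · rcases Nat.eq_or_lt_of_le hgt with rfl | hgt2
          · rw [if_neg (by omega), if_pos rfl, zero_add,
              S.δσ_succ (m+1) (j'+1) (by omega) y]
          · rw [if_neg (by omega), if_neg (by omega), add_zero]
            have hface : (Y.Fixed H).δ (m+1) (i+1) ((Y.Fixed H).σ (m+1) (j'+1) y)
                = (Y.Fixed H).σ m (j'+1) ((Y.Fixed H).δ m ((i+1)-1) y) :=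
              S.δσ_gt m (i+1) (j'+1) (by omega) (by omega) y
            simp only [Nat.add_sub_cancel] at hface
            have hz : f H ((Y.Fixed H).σ m (j'+1) ((Y.Fixed H).δ m i y)) = 0 :=
              hf_deg H m rfl _ ⟨j'+1, by omega, _, rfl⟩
            rw [hface, hz, smul_zero]
      rw [Finset.sum_congr rfl hsum, Finset.sum_add_distrib,
        Finset.sum_ite_eq' (Finset.range (m+1+1)) j'
          (fun _ => ((-1:ℤ)^(j'+1)) • f H y),
        Finset.sum_ite_eq' (Finset.range (m+1+1)) (j'+1)
          (fun _ => ((-1:ℤ)^(j'+1+1)) • f H y),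
        if_pos (by simp only [Finset.mem_range]; omega),
        if_pos (by simp only [Finset.mem_range]; omega), hd0, hz0, hφ_zero]
      rw [pow_succ ((-1:ℤ)) (j'+1), mul_neg_one, neg_smul, add_neg_cancel, add_zero]
end

section
/- Let Γ be a simplicial abelian group. The universal principal twisted cartesian product total space W(Γ) is contractible: the functions h_{q-i} : W(Γ)_q → W(Γ)_{q+1} defined by h_{q-i}(x_q,…,x_0) = (0,…,0, ∂₀^{q-i}x_q + ⋯ + ∂₀x_{i+1} + x_i, x_{i-1},…,x_0) for 0 ≤ i ≤ q constitute a simplicial contraction of W(Γ) to the basepoint. -/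
universe u

variable (Γ : SData.{u}) [∀ n, AddCommGroup (Γ.obj n)]

/-- May's `W`-construction on a simplicial abelian group `Γ`:
`W(Γ)_q = Γ_q × Γ_{q-1} × ⋯ × Γ₀` (a `q`-simplex is the tuple `(x_q, …, x_0)`, recorded
as the dependent function `d ↦ x_d`). -/
def WC : SData.{u} where
  obj q := ∀ d : Fin (q+1), Γ.obj d
  δ q i x := fun d =>
    if q + 1 ≤ (d : ℕ) + i then Γ.δ d (i - (q - (d : ℕ))) (x d.succ)
    else if (d : ℕ) + i + 1 = q + 1 then
      Γ.δ d 0 (x d.succ) + x ⟨(d : ℕ), by have := d.isLt; omega⟩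
    else x ⟨(d : ℕ), by have := d.isLt; omega⟩
  σ q i x := fun d =>
    if h1 : q + 1 ≤ (d : ℕ) + i then
      if hd : 1 ≤ (d : ℕ) then
        cast (congrArg Γ.obj (by omega : (d : ℕ) - 1 + 1 = (d : ℕ)))
          (Γ.σ ((d : ℕ) - 1) (i - (q + 1 - (d : ℕ)))
            (x ⟨(d : ℕ) - 1, by have := d.isLt; omega⟩))
      else 0
    else if h2 : (d : ℕ) + i = q then 0
    else x ⟨(d : ℕ), by have := d.isLt; omega⟩

/-- Iterated `∂₀ : Γ_{i+m} → Γ_i`. -/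
def pow0 (i : ℕ) : ∀ m, Γ.obj (i + m) → Γ.obj i
  | 0, x => x
  | m+1, x => pow0 i m (Γ.δ (i+m) 0 x)

/-- The contracting functions `h_{q-i} : W(Γ)_q → W(Γ)_{q+1}`,
`h_{q-i}(x_q,…,x_0) = (0,…,0, ∂₀^{q-i}x_q + ⋯ + ∂₀x_{i+1} + x_i, x_{i-1},…,x_0)`
(here the second argument is the position index `i`, `0 ≤ i ≤ q`). -/
def hmap (q i : ℕ) (x : ∀ d : Fin (q+1), Γ.obj d) : ∀ d : Fin (q+2), Γ.obj d :=
  fun d =>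
    if h1 : (d : ℕ) < i ∧ (d : ℕ) ≤ q then x ⟨(d : ℕ), by omega⟩
    else if h2 : (d : ℕ) = i then
      cast (congrArg Γ.obj h2.symm)
        (∑ m ∈ Finset.range (q - i + 1),
          if hm : i + m ≤ q then pow0 Γ i m (x ⟨i + m, by omega⟩) else 0)
    else 0

/-!
`hmap Γ q p` keeps the entries of `x` below position `p`, puts `∑ₘ ∂₀ᵐ x_{p+m}` at `p` and zeros
above, so every homotopy identity can be checked entrywise. Away from position `p` it is
immediate from the formulas for the faces and degeneracies of `W(Γ)`; at `p` it reduces to the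
simplicial identities for the iterated faces `∂₀ᵐ`. There the face `∂ᵢ` of `W(Γ)`, which adds
`∂₀ x_{d+1}` to `x_d` in the single entry with `d + i = q`, merges two adjacent terms of the sum,
and dually `sᵢ` inserts a zero term.
-/

open Finset

lemma Finset.sum_range_eq_of_merge_adjacent {M : Type*} [AddCommMonoid M] {N k : ℕ}
    (hk : k ≤ N) (f g : ℕ → M) (hlt : ∀ m < k, g m = f m) (hk' : g k = f k + f (k + 1))
    (hgt : ∀ m, k < m → m ≤ N → g m = f (m + 1)) :
    ∑ m ∈ range (N + 1), g m = ∑ m ∈ range (N + 2), f m := by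
  induction N, hk using Nat.le_induction with
  | base =>
    rw [sum_range_succ, sum_range_succ, sum_range_succ (n := k),
      sum_congr rfl fun m hm => hlt m (mem_range.mp hm), hk', add_assoc]
  | succ N _ ih =>
    rw [sum_range_succ, ih fun m hm hmN => hgt m hm (by omega), hgt (N + 1) (by omega) le_rfl,
      sum_range_succ (n := N + 2)]

namespace SData

variable {Γ : SData.{u}}

abbrev objCast (Γ : SData.{u}) {a b : ℕ} (h : a = b) : Γ.obj a → Γ.obj b :=
  cast (congrArg Γ.obj h)

lemma δ_objCast {a b : ℕ} (h : a + 1 = b + 1) (k : ℕ) (x : Γ.obj (a + 1)) :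
    Γ.δ b k (Γ.objCast h x) = Γ.objCast (Nat.succ_inj.mp h) (Γ.δ a k x) := by
  obtain rfl : a = b := Nat.succ_inj.mp h
  rfl

lemma objCast_apply {n a b : ℕ} (x : ∀ d : Fin n, Γ.obj d) (h : a = b) (ha : a < n) :
    Γ.objCast h (x ⟨a, ha⟩) = x ⟨b, h ▸ ha⟩ := by
  subst h
  rfl

lemma IsSimplicial.pow0_δ_of_le (hΓ : Γ.IsSimplicial) (i : ℕ) :
    ∀ m k, k ≤ m → ∀ x : Γ.obj (i + m + 1), pow0 Γ i m (Γ.δ (i + m) k x) = pow0 Γ i (m + 1) x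
  | 0, 0, _, _ => rfl
  | m + 1, 0, _, _ => rfl
  | m + 1, k + 1, hk, x => by
    change pow0 Γ i m (Γ.δ (i + m) 0 (Γ.δ (i + m + 1) (k + 1) x)) = _
    rw [hΓ.δδ (i + m) 0 (k + 1) k.succ_pos (by omega) x, Nat.add_sub_cancel,
      hΓ.pow0_δ_of_le i m k (by omega) (Γ.δ (i + m + 1) 0 x)]
    rfl

lemma IsSimplicial.pow0_δ_of_ge (hΓ : Γ.IsSimplicial) (i : ℕ) :
    ∀ m k, m ≤ k → k ≤ i + m + 1 → ∀ x : Γ.obj (i + m + 1),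
      pow0 Γ i m (Γ.δ (i + m) k x) = Γ.δ i (k - m) (pow0 Γ (i + 1) m (Γ.objCast (by omega) x))
  | 0, _, _, _, _ => rfl
  | m + 1, k, hmk, hk, x => by
    change pow0 Γ i m (Γ.δ (i + m) 0 (Γ.δ (i + m + 1) k x)) = _
    rw [hΓ.δδ (i + m) 0 k (by omega) (by omega) x,
      hΓ.pow0_δ_of_ge i m (k - 1) (by omega) (by omega) (Γ.δ (i + m + 1) 0 x),
      show k - 1 - m = k - (m + 1) by omega]
    change _ = Γ.δ i (k - (m + 1)) (pow0 Γ (i + 1) m (Γ.δ (i + 1 + m) 0 (Γ.objCast _ x)))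
    rw [δ_objCast (by omega : i + (m + 1) + 1 = i + 1 + m + 1) 0 x]
    rfl

lemma IsSimplicial.pow0_succ_σ_of_le (hΓ : Γ.IsSimplicial) (i : ℕ) :
    ∀ m k, k ≤ m → ∀ x : Γ.obj (i + m), pow0 Γ i (m + 1) (Γ.σ (i + m) k x) = pow0 Γ i m x
  | 0, 0, _, x => hΓ.δσ_self i 0 (Nat.zero_le i) x
  | m + 1, 0, _, x => by
    change pow0 Γ i (m + 1) (Γ.δ (i + m + 1) 0 (Γ.σ (i + m + 1) 0 x)) = _
    rw [hΓ.δσ_self (i + m + 1) 0 (Nat.zero_le _) x]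
  | m + 1, k + 1, hk, x => by
    change pow0 Γ i (m + 1) (Γ.δ (i + m + 1) 0 (Γ.σ (i + m + 1) (k + 1) x)) = _
    rw [hΓ.δσ_lt (i + m) 0 (k + 1) k.succ_pos (by omega) x, Nat.add_sub_cancel,
      hΓ.pow0_succ_σ_of_le i m k (by omega) (Γ.δ (i + m) 0 x)]
    rfl

lemma IsSimplicial.pow0_σ_add (hΓ : Γ.IsSimplicial) (i : ℕ) :
    ∀ m c, c ≤ i → ∀ x : Γ.obj (i + m),
      pow0 Γ (i + 1) m (Γ.objCast (by omega) (Γ.σ (i + m) (m + c) x)) = Γ.σ i c (pow0 Γ i m x)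
  | 0, c, _, x => by
    rw [Nat.zero_add]
    rfl
  | m + 1, c, hc, x => by
    change pow0 Γ (i + 1) m (Γ.δ (i + 1 + m) 0 (Γ.objCast _ _)) = _
    rw [δ_objCast (by omega : i + (m + 1) + 1 = i + 1 + m + 1) 0 _,
      show Γ.δ (i + (m + 1)) 0 (Γ.σ (i + (m + 1)) (m + 1 + c) x) = _ from
        hΓ.δσ_lt (i + m) 0 (m + 1 + c) (by omega) (by omega) x,
      show m + 1 + c - 1 = m + c by omega, hΓ.pow0_σ_add i m c hc (Γ.δ (i + m) 0 x)]
    rfl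

variable [∀ n, AddCommGroup (Γ.obj n)]

def AdditiveFaces (Γ : SData.{u}) [∀ n, AddCommGroup (Γ.obj n)] : Prop :=
  ∀ (n i : ℕ) (x y : Γ.obj (n + 1)), Γ.δ n i (x + y) = Γ.δ n i x + Γ.δ n i y

def AdditiveDegeneracies (Γ : SData.{u}) [∀ n, AddCommGroup (Γ.obj n)] : Prop :=
  ∀ (n i : ℕ) (x y : Γ.obj n), Γ.σ n i (x + y) = Γ.σ n i x + Γ.σ n i y

lemma AdditiveFaces.δ_zero (hδ_add : Γ.AdditiveFaces) (n i : ℕ) : Γ.δ n i 0 = 0 :=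
  map_zero (AddMonoidHom.mk' (Γ.δ n i) (hδ_add n i))

lemma AdditiveFaces.δ_sum (hδ_add : Γ.AdditiveFaces) {ι : Type*} (n i : ℕ) (s : Finset ι)
    (f : ι → Γ.obj (n + 1)) : Γ.δ n i (∑ j ∈ s, f j) = ∑ j ∈ s, Γ.δ n i (f j) :=
  map_sum (AddMonoidHom.mk' (Γ.δ n i) (hδ_add n i)) f s

lemma AdditiveFaces.pow0_add (hδ_add : Γ.AdditiveFaces) (i : ℕ) :
    ∀ m (x y : Γ.obj (i + m)), pow0 Γ i m (x + y) = pow0 Γ i m x + pow0 Γ i m y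
  | 0, _, _ => rfl
  | m + 1, x, y => by
    change pow0 Γ i m (Γ.δ (i + m) 0 (x + y)) = _
    rw [hδ_add, hδ_add.pow0_add i m]
    rfl

lemma AdditiveFaces.pow0_zero (hδ_add : Γ.AdditiveFaces) (i m : ℕ) : pow0 Γ i m 0 = 0 :=
  map_zero (AddMonoidHom.mk' (pow0 Γ i m) (hδ_add.pow0_add i m))

lemma AdditiveDegeneracies.σ_zero (hσ_add : Γ.AdditiveDegeneracies) (n i : ℕ) :
    Γ.σ n i 0 = 0 :=
  map_zero (AddMonoidHom.mk' (Γ.σ n i) (hσ_add n i))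

lemma AdditiveDegeneracies.σ_sum (hσ_add : Γ.AdditiveDegeneracies) {ι : Type*} (n i : ℕ)
    (s : Finset ι) (f : ι → Γ.obj n) : Γ.σ n i (∑ j ∈ s, f j) = ∑ j ∈ s, Γ.σ n i (f j) :=
  map_sum (AddMonoidHom.mk' (Γ.σ n i) (hσ_add n i)) f s

end SData

namespace WC

variable {Γ : SData.{u}} [∀ n, AddCommGroup (Γ.obj n)]

lemma δ_apply_of_add_lt {q i d : ℕ} (h : d + i < q) (x : (WC Γ).obj (q + 1)) (hd : d < q + 1) :
    (WC Γ).δ q i x ⟨d, hd⟩ = x ⟨d, by omega⟩ := by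
  simp only [WC]
  rw [if_neg (by omega), if_neg (by omega)]

lemma δ_apply_of_add_eq {q i d : ℕ} (h : d + i = q) (x : (WC Γ).obj (q + 1)) (hd : d < q + 1) :
    (WC Γ).δ q i x ⟨d, hd⟩ = Γ.δ d 0 (x ⟨d + 1, by omega⟩) + x ⟨d, by omega⟩ := by
  simp only [WC]
  rw [if_neg (by omega), if_pos (by omega)]
  rfl

lemma δ_apply_of_lt_add {q i d : ℕ} (h : q < d + i) (x : (WC Γ).obj (q + 1)) (hd : d < q + 1) :
    (WC Γ).δ q i x ⟨d, hd⟩ = Γ.δ d (i - (q - d)) (x ⟨d + 1, by omega⟩) := by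
  simp only [WC]
  rw [if_pos (by omega)]
  rfl

lemma σ_apply_of_add_lt {q i d : ℕ} (h : d + i < q) (x : (WC Γ).obj q) (hd : d < q + 2) :
    (WC Γ).σ q i x ⟨d, hd⟩ = x ⟨d, by omega⟩ := by
  simp only [WC]
  rw [dif_neg (by omega), dif_neg (by omega)]

lemma σ_apply_of_add_eq {q i d : ℕ} (h : d + i = q) (x : (WC Γ).obj q) (hd : d < q + 2) :
    (WC Γ).σ q i x ⟨d, hd⟩ = 0 := by
  simp only [WC]
  rw [dif_neg (by omega), dif_pos h]

lemma σ_apply_succ_of_le_add {q i d : ℕ} (h : q ≤ d + i) (x : (WC Γ).obj q) (hd : d + 1 < q + 2) :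
    (WC Γ).σ q i x ⟨d + 1, hd⟩ = Γ.σ d (i - (q - d)) (x ⟨d, by omega⟩) := by
  simp only [WC]
  rw [dif_pos (by omega), dif_pos (Nat.le_add_left 1 d), show q + 1 - (d + 1) = q - d by omega]
  rfl

end WC

section HmapSum

variable {Γ : SData.{u}} [∀ n, AddCommGroup (Γ.obj n)]

open SData

def hmapTerm (q i : ℕ) (x : (WC Γ).obj q) (m : ℕ) : Γ.obj i :=
  if hm : i + m ≤ q then pow0 Γ i m (x ⟨i + m, by omega⟩) else 0

def hmapSum (q i : ℕ) (x : (WC Γ).obj q) : Γ.obj i :=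
  ∑ m ∈ range (q - i + 1), hmapTerm q i x m

lemma hmapTerm_of_le {q i m : ℕ} (h : i + m ≤ q) (x : (WC Γ).obj q) :
    hmapTerm q i x m = pow0 Γ i m (x ⟨i + m, by omega⟩) :=
  dif_pos h

lemma hmap_apply_of_lt {q i d : ℕ} (hd : d < i) (hdq : d ≤ q) (x : (WC Γ).obj q) (h : d < q + 2) :
    hmap Γ q i x ⟨d, h⟩ = x ⟨d, by omega⟩ :=
  dif_pos ⟨hd, hdq⟩

lemma hmap_apply_self {q i : ℕ} (x : (WC Γ).obj q) (h : i < q + 2) :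
    hmap Γ q i x ⟨i, h⟩ = hmapSum q i x := by
  simp only [hmap]
  rw [dif_neg (by omega), dif_pos trivial]
  rfl

lemma hmap_apply_of_gt {q i d : ℕ} (hd : i < d) (x : (WC Γ).obj q) (h : d < q + 2) :
    hmap Γ q i x ⟨d, h⟩ = 0 := by
  simp only [hmap]
  rw [dif_neg (by omega), dif_neg (by omega)]

lemma hmapSum_self (q : ℕ) (x : (WC Γ).obj q) : hmapSum q q x = x ⟨q, q.lt_succ_self⟩ := by
  rw [hmapSum, Nat.sub_self, sum_range_one, hmapTerm_of_le q.add_zero.le]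
  rfl

lemma hmapSum_eq_δ_zero_add (hΓ : Γ.IsSimplicial) (hδ_add : Γ.AdditiveFaces)
    {q p : ℕ} (hp : p < q) (x : (WC Γ).obj q) :
    hmapSum q p x = Γ.δ p 0 (hmapSum q (p + 1) x) + x ⟨p, by omega⟩ := by
  rw [hmapSum, hmapSum, show q - p + 1 = q - (p + 1) + 1 + 1 by omega, sum_range_succ',
    hδ_add.δ_sum]
  congr 1
  · refine sum_congr rfl fun m hm => ?_
    have hm : m ≤ q - (p + 1) := Nat.lt_succ_iff.mp (mem_range.mp hm)
    rw [hmapTerm_of_le (by omega), hmapTerm_of_le (by omega),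
      ← hΓ.pow0_δ_of_le p m m le_rfl, hΓ.pow0_δ_of_ge p m m le_rfl (by omega), Nat.sub_self,
      objCast_apply x (by omega : p + (m + 1) = p + 1 + m)]
  · rw [hmapTerm_of_le (by omega)]
    rfl

lemma hmapSum_δ_of_add_le (hΓ : Γ.IsSimplicial) (hδ_add : Γ.AdditiveFaces)
    {q p i : ℕ} (h : p + i ≤ q) (x : (WC Γ).obj (q + 1)) :
    hmapSum q p ((WC Γ).δ q i x) = hmapSum (q + 1) p x := by
  rw [hmapSum, hmapSum, show q + 1 - p + 1 = q - p + 2 by omega]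
  refine sum_range_eq_of_merge_adjacent (k := q - p - i) (by omega) _ _ (fun m hm => ?_) ?_
    (fun m hm hmq => ?_)
  · rw [hmapTerm_of_le (by omega), hmapTerm_of_le (by omega), WC.δ_apply_of_add_lt (by omega)]
  · rw [hmapTerm_of_le (by omega), hmapTerm_of_le (by omega), hmapTerm_of_le (by omega),
      WC.δ_apply_of_add_eq (by omega), hδ_add.pow0_add, add_comm]
    rfl
  · rw [hmapTerm_of_le (by omega), hmapTerm_of_le (by omega), WC.δ_apply_of_lt_add (by omega),
      hΓ.pow0_δ_of_le p m _ (by omega)]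
    rfl

lemma hmapSum_δ_of_lt_add (hΓ : Γ.IsSimplicial) (hδ_add : Γ.AdditiveFaces)
    {q p i : ℕ} (hp : p ≤ q) (h : q < p + i) (hi : i ≤ q + 1) (x : (WC Γ).obj (q + 1)) :
    hmapSum q p ((WC Γ).δ q i x) = Γ.δ p (i - (q - p)) (hmapSum (q + 1) (p + 1) x) := by
  rw [hmapSum, hmapSum, show q + 1 - (p + 1) = q - p by omega, hδ_add.δ_sum]
  refine sum_congr rfl fun m hm => ?_
  have hm : m ≤ q - p := Nat.lt_succ_iff.mp (mem_range.mp hm)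
  rw [hmapTerm_of_le (by omega), hmapTerm_of_le (by omega), WC.δ_apply_of_lt_add (by omega),
    hΓ.pow0_δ_of_ge p m _ (by omega) (by omega), show i - (q - (p + m)) - m = i - (q - p) by omega,
    objCast_apply x (by omega : p + m + 1 = p + 1 + m)]

lemma hmapSum_σ_of_add_le (hΓ : Γ.IsSimplicial) (hδ_add : Γ.AdditiveFaces)
    {q p i : ℕ} (h : p + i ≤ q) (x : (WC Γ).obj q) :
    hmapSum (q + 1) p ((WC Γ).σ q i x) = hmapSum q p x := by
  have hsucc : ∀ m, q - p - i ≤ m → m ≤ q - p →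
      hmapTerm (q + 1) p ((WC Γ).σ q i x) (m + 1) = hmapTerm q p x m := fun m hm hmq => by
    rw [hmapTerm_of_le (by omega), hmapTerm_of_le (by omega)]
    change pow0 Γ p (m + 1) ((WC Γ).σ q i x ⟨p + m + 1, by omega⟩) = _
    rw [WC.σ_apply_succ_of_le_add (by omega), hΓ.pow0_succ_σ_of_le p m _ (by omega)]
  rw [hmapSum, hmapSum, show q + 1 - p + 1 = q - p + 2 by omega]
  refine (sum_range_eq_of_merge_adjacent (k := q - p - i) (by omega) _ _ (fun m hm => ?_) ?_
    (fun m hm hmq => (hsucc m hm.le hmq).symm)).symm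
  · rw [hmapTerm_of_le (by omega), hmapTerm_of_le (by omega), WC.σ_apply_of_add_lt (by omega)]
  · rw [hsucc _ le_rfl (Nat.sub_le _ _), hmapTerm_of_le (by omega : p + (q - p - i) ≤ q + 1),
      WC.σ_apply_of_add_eq (by omega), hδ_add.pow0_zero, zero_add]

lemma hmapSum_σ_of_le_add (hΓ : Γ.IsSimplicial) (hσ_add : Γ.AdditiveDegeneracies)
    {q p i : ℕ} (hp : p ≤ q) (h : q ≤ p + i) (hi : i ≤ q) (x : (WC Γ).obj q) :
    hmapSum (q + 1) (p + 1) ((WC Γ).σ q i x) = Γ.σ p (i - (q - p)) (hmapSum q p x) := by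
  rw [hmapSum, hmapSum, show q + 1 - (p + 1) = q - p by omega, hσ_add.σ_sum]
  refine sum_congr rfl fun m hm => ?_
  have hm : m ≤ q - p := Nat.lt_succ_iff.mp (mem_range.mp hm)
  rw [hmapTerm_of_le (by omega), hmapTerm_of_le (by omega),
    ← objCast_apply ((WC Γ).σ q i x) (by omega : p + m + 1 = p + 1 + m) (by omega),
    WC.σ_apply_succ_of_le_add (by omega), show i - (q - (p + m)) = m + (i - (q - p)) by omega,
    hΓ.pow0_σ_add p m _ (by omega)]

end HmapSum

namespace WC

variable {Γ : SData.{u}} [∀ n, AddCommGroup (Γ.obj n)]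

open SData

lemma δ_apply_eq_zero_of_forall_gt (hδ_add : Γ.AdditiveFaces)
    {q p i d : ℕ} {y : (WC Γ).obj (q + 1)} (hy : ∀ e (he : e < q + 2), p < e → y ⟨e, he⟩ = 0)
    (hd : p < d) (hdq : d < q + 1) : (WC Γ).δ q i y ⟨d, hdq⟩ = 0 := by
  rcases lt_trichotomy (d + i) q with h | h | h
  · rw [δ_apply_of_add_lt h, hy d _ hd]
  · rw [δ_apply_of_add_eq h, hy d _ hd, hy _ _ (by omega), hδ_add.δ_zero, add_zero]
  · rw [δ_apply_of_lt_add h, hy _ _ (by omega), hδ_add.δ_zero]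

lemma σ_apply_eq_zero_of_forall_gt (hσ_add : Γ.AdditiveDegeneracies)
    {q p i d : ℕ} (hpi : p + i < q) {y : (WC Γ).obj q}
    (hy : ∀ e (he : e < q + 1), p < e → y ⟨e, he⟩ = 0)
    (hd : p < d) (hdq : d < q + 2) : (WC Γ).σ q i y ⟨d, hdq⟩ = 0 := by
  rcases lt_trichotomy (d + i) q with h | h | h
  · rw [σ_apply_of_add_lt h, hy d _ hd]
  · rw [σ_apply_of_add_eq h]
  · obtain ⟨e, rfl⟩ : ∃ e, d = e + 1 := ⟨d - 1, by omega⟩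
    rw [σ_apply_succ_of_le_add (by omega), hy _ _ (by omega), hσ_add.σ_zero]

/- `hmap` lands in `∀ d : Fin (q + 2), Γ.obj d`, which is `(WC Γ).obj (q + 1)` only after
unfolding `WC`; rewriting the faces and degeneracies of its values therefore needs `erw`. -/

lemma δ_zero_hmap_self (hδ_add : Γ.AdditiveFaces)
    (q : ℕ) (x : (WC Γ).obj q) : (WC Γ).δ q 0 (hmap Γ q q x) = x := by
  funext ⟨d, hd⟩
  obtain h | rfl : d < q ∨ d = q := by omega
  · erw [δ_apply_of_add_lt h, hmap_apply_of_lt h h.le]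
  · erw [δ_apply_of_add_eq d.add_zero, hmap_apply_of_gt d.lt_succ_self, hδ_add.δ_zero,
      zero_add, hmap_apply_self, hmapSum_self]

lemma δ_last_hmap_zero (hδ_add : Γ.AdditiveFaces)
    (q : ℕ) (x : (WC Γ).obj q) :
    (WC Γ).δ q (q + 1) (hmap Γ q 0 x) = fun d : Fin (q + 1) => (0 : Γ.obj d) := by
  funext ⟨d, hd⟩
  erw [δ_apply_of_lt_add (by omega), hmap_apply_of_gt d.succ_pos, hδ_add.δ_zero]

lemma δ_hmap_of_add_le (hΓ : Γ.IsSimplicial) (hδ_add : Γ.AdditiveFaces)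
    {q p i : ℕ} (h : p + i ≤ q) (x : (WC Γ).obj (q + 1)) :
    (WC Γ).δ (q + 1) i (hmap Γ (q + 1) p x) = hmap Γ q p ((WC Γ).δ q i x) := by
  funext ⟨d, hd⟩
  rcases lt_trichotomy d p with hdp | rfl | hdp
  · erw [δ_apply_of_add_lt (by omega), hmap_apply_of_lt hdp (by omega),
      hmap_apply_of_lt hdp (by omega), δ_apply_of_add_lt (by omega)]
  · erw [δ_apply_of_add_lt (by omega), hmap_apply_self, hmap_apply_self,
      hmapSum_δ_of_add_le hΓ hδ_add h]
  · rw [hmap_apply_of_gt hdp,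
      δ_apply_eq_zero_of_forall_gt hδ_add (fun _ he hpe => hmap_apply_of_gt hpe x he) hdp]

lemma δ_hmap_eq_δ_hmap_succ (hΓ : Γ.IsSimplicial) (hδ_add : Γ.AdditiveFaces)
    {q p : ℕ} (hp : p < q) (x : (WC Γ).obj q) :
    (WC Γ).δ q (q - p) (hmap Γ q p x) = (WC Γ).δ q (q - p) (hmap Γ q (p + 1) x) := by
  funext ⟨d, hd⟩
  rcases lt_trichotomy d p with hdp | rfl | hdp
  · erw [δ_apply_of_add_lt (by omega), δ_apply_of_add_lt (by omega),
      hmap_apply_of_lt hdp (by omega), hmap_apply_of_lt (by omega) (by omega)]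
  · erw [δ_apply_of_add_eq (by omega), δ_apply_of_add_eq (by omega),
      hmap_apply_of_gt d.lt_succ_self, hδ_add.δ_zero, zero_add, hmap_apply_self,
      hmap_apply_self, hmap_apply_of_lt d.lt_succ_self hp.le, hmapSum_eq_δ_zero_add hΓ hδ_add hp]
  · erw [δ_apply_of_lt_add (by omega), δ_apply_of_lt_add (by omega),
      hmap_apply_of_gt (by omega), hmap_apply_of_gt (by omega)]

lemma δ_hmap_succ_of_lt_add (hΓ : Γ.IsSimplicial) (hδ_add : Γ.AdditiveFaces)
    {q p i : ℕ} (hp : p ≤ q) (h : q + 1 < p + i) (hi : i ≤ q + 2) (x : (WC Γ).obj (q + 1)) :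
    (WC Γ).δ (q + 1) i (hmap Γ (q + 1) (p + 1) x) = hmap Γ q p ((WC Γ).δ q (i - 1) x) := by
  funext ⟨d, hd⟩
  rcases lt_trichotomy d p with hdp | rfl | hdp
  · rw [hmap_apply_of_lt hdp (by omega)]
    rcases lt_trichotomy (d + i) (q + 1) with h' | h' | h'
    · erw [δ_apply_of_add_lt h', hmap_apply_of_lt (by omega) (by omega),
        δ_apply_of_add_lt (by omega)]
    · erw [δ_apply_of_add_eq h', hmap_apply_of_lt (by omega) (by omega),
        hmap_apply_of_lt (by omega) (by omega), δ_apply_of_add_eq (by omega)]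
    · erw [δ_apply_of_lt_add h', hmap_apply_of_lt (by omega) (by omega),
        δ_apply_of_lt_add (by omega), show i - 1 - (q - d) = i - (q + 1 - d) by omega]
  · erw [δ_apply_of_lt_add (by omega), hmap_apply_self, hmap_apply_self,
      hmapSum_δ_of_lt_add hΓ hδ_add hp (by omega) (by omega),
      show i - 1 - (q - d) = i - (q + 1 - d) by omega]
  · erw [hmap_apply_of_gt hdp, δ_apply_of_lt_add (by omega), hmap_apply_of_gt (by omega),
      hδ_add.δ_zero]

lemma σ_hmap_of_add_le (hΓ : Γ.IsSimplicial) (hδ_add : Γ.AdditiveFaces)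
    (hσ_add : Γ.AdditiveDegeneracies) {q p i : ℕ} (h : p + i ≤ q) (x : (WC Γ).obj q) :
    (WC Γ).σ (q + 1) i (hmap Γ q p x) = hmap Γ (q + 1) p ((WC Γ).σ q i x) := by
  funext ⟨d, hd⟩
  rcases lt_trichotomy d p with hdp | rfl | hdp
  · erw [σ_apply_of_add_lt (by omega), hmap_apply_of_lt hdp (by omega),
      hmap_apply_of_lt hdp (by omega), σ_apply_of_add_lt (by omega)]
  · erw [σ_apply_of_add_lt (by omega), hmap_apply_self, hmap_apply_self,
      hmapSum_σ_of_add_le hΓ hδ_add h]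
  · rw [hmap_apply_of_gt hdp, σ_apply_eq_zero_of_forall_gt hσ_add (by omega)
      (fun _ he hpe => hmap_apply_of_gt hpe x he) hdp]

lemma σ_hmap_of_lt_add (hΓ : Γ.IsSimplicial) (hσ_add : Γ.AdditiveDegeneracies)
    {q p i : ℕ} (hp : p ≤ q) (h : q < p + i) (hi : i ≤ q + 1) (x : (WC Γ).obj q) :
    (WC Γ).σ (q + 1) i (hmap Γ q p x) = hmap Γ (q + 1) (p + 1) ((WC Γ).σ q (i - 1) x) := by
  funext ⟨d, hd⟩
  rcases lt_trichotomy d (p + 1) with hdp | rfl | hdp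
  · rw [hmap_apply_of_lt hdp (by omega)]
    rcases lt_trichotomy (d + i) (q + 1) with h' | h' | h'
    · erw [σ_apply_of_add_lt h', hmap_apply_of_lt (by omega) (by omega),
        σ_apply_of_add_lt (by omega)]
    · erw [σ_apply_of_add_eq h', σ_apply_of_add_eq (by omega)]
    · obtain ⟨e, rfl⟩ : ∃ e, d = e + 1 := ⟨d - 1, by omega⟩
      erw [σ_apply_succ_of_le_add (by omega), hmap_apply_of_lt (by omega) (by omega),
        σ_apply_succ_of_le_add (by omega), show i - 1 - (q - e) = i - (q + 1 - e) by omega]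
  · erw [σ_apply_succ_of_le_add (by omega), hmap_apply_self, hmap_apply_self,
      hmapSum_σ_of_le_add hΓ hσ_add hp (by omega) (by omega),
      show i - 1 - (q - p) = i - (q + 1 - p) by omega]
  · obtain ⟨e, rfl⟩ : ∃ e, d = e + 1 := ⟨d - 1, by omega⟩
    erw [hmap_apply_of_gt hdp, σ_apply_succ_of_le_add (by omega), hmap_apply_of_gt (by omega),
      hσ_add.σ_zero]

end WC

/-- For a simplicial abelian group `Γ`, the functions
`h_{q-i} : W(Γ)_q → W(Γ)_{q+1}` constitute a simplicial contraction of `W(Γ)` to the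
basepoint: writing `h_j := h_{q-i}` with `j = q - i`, they satisfy the simplicial homotopy
identities with endpoints `∂₀ ∘ h₀ = id` and `∂_{q+1} ∘ h_q = 0` (the constant basepoint
map). -/
theorem W_contractible
    (hΓ : Γ.IsSimplicial)
    (hδ_add : ∀ (n i : ℕ) (x y : Γ.obj (n+1)), Γ.δ n i (x + y) = Γ.δ n i x + Γ.δ n i y)
    (hσ_add : ∀ (n i : ℕ) (x y : Γ.obj n), Γ.σ n i (x + y) = Γ.σ n i x + Γ.σ n i y) :
    -- `∂₀ h₀ = id`:
    (∀ (q : ℕ) (x : (WC Γ).obj q), (WC Γ).δ q 0 (hmap Γ q q x) = x) ∧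
    -- `∂_{q+1} h_q = 0` (the basepoint):
    (∀ (q : ℕ) (x : (WC Γ).obj q),
      (WC Γ).δ q (q+1) (hmap Γ q 0 x) = fun d : Fin (q+1) => (0 : Γ.obj d)) ∧
    -- `∂ᵢ h_j = h_{j-1} ∂ᵢ` for `i < j`:
    (∀ (q i j : ℕ), i < j → j ≤ q + 1 → ∀ x : (WC Γ).obj (q+1),
      (WC Γ).δ (q+1) i (hmap Γ (q+1) (q+1-j) x) =
        hmap Γ q (q-(j-1)) ((WC Γ).δ q i x)) ∧
    -- `∂_{j+1} h_{j+1} = ∂_{j+1} h_j`: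
    (∀ (q j : ℕ), j < q → ∀ x : (WC Γ).obj q,
      (WC Γ).δ q (j+1) (hmap Γ q (q-(j+1)) x) = (WC Γ).δ q (j+1) (hmap Γ q (q-j) x)) ∧
    -- `∂ᵢ h_j = h_j ∂_{i-1}` for `i > j + 1`:
    (∀ (q i j : ℕ), j + 1 < i → i ≤ q + 2 → j ≤ q + 1 → ∀ x : (WC Γ).obj (q+1),
      (WC Γ).δ (q+1) i (hmap Γ (q+1) (q+1-j) x) = hmap Γ q (q-j) ((WC Γ).δ q (i-1) x)) ∧
    -- `sᵢ h_j = h_{j+1} sᵢ` for `i ≤ j`: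
    (∀ (q i j : ℕ), i ≤ j → j ≤ q → ∀ x : (WC Γ).obj q,
      (WC Γ).σ (q+1) i (hmap Γ q (q-j) x) = hmap Γ (q+1) (q-j) ((WC Γ).σ q i x)) ∧
    -- `sᵢ h_j = h_j s_{i-1}` for `i > j`:
    (∀ (q i j : ℕ), j < i → i ≤ q + 1 → j ≤ q → ∀ x : (WC Γ).obj q,
      (WC Γ).σ (q+1) i (hmap Γ q (q-j) x) = hmap Γ (q+1) (q+1-j) ((WC Γ).σ q (i-1) x)) := by
  refine ⟨WC.δ_zero_hmap_self hδ_add, WC.δ_last_hmap_zero hδ_add, ?_, ?_, ?_, ?_, ?_⟩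
  · intro q i j hij hj x
    rw [show q - (j - 1) = q + 1 - j by omega]
    exact WC.δ_hmap_of_add_le hΓ hδ_add (by omega) x
  · intro q j hj x
    have h := WC.δ_hmap_eq_δ_hmap_succ hΓ hδ_add (p := q - (j + 1)) (by omega) x
    rwa [show q - (q - (j + 1)) = j + 1 by omega, show q - (j + 1) + 1 = q - j by omega] at h
  · intro q i j hij hi _ x
    rw [show q + 1 - j = q - j + 1 by omega]
    exact WC.δ_hmap_succ_of_lt_add hΓ hδ_add (Nat.sub_le q j) (by omega) hi x
  · intro q i j hij hj x
    exact WC.σ_hmap_of_add_le hΓ hδ_add hσ_add (by omega) x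
  · intro q i j hij hi hj x
    rw [show q + 1 - j = q - j + 1 by omega]
    exact WC.σ_hmap_of_lt_add hΓ hσ_add (Nat.sub_le q j) (by omega) hi x
end

section
/- Let 𝒜 be an equivariant twisted Cartan cohomology theory, X a G-simplicial set, τ : ΦX → π̲ an O_G-twisting function and φ a π̲-module structure on M = (Z⁰𝒜)₀. Then H⁰ of the cochain complex (A_φ*(X;τ), δ̄) equals the set of lifts of θ(τ) to Z⁰𝒜 ×_{τ(π̲)} W̄π̲, and in degree 0 two such lifts are vertically homotopic if and only if they are equal. -/
universe u

/-! ### Equivariant twisted Cartan cohomology theories -/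

/-- The data of an equivariant (twisted) Cartan cohomology theory: a sequence of
simplicial abelian `O_G`-groups `Aⁱ` with simplicial differentials `δⁱ : Aⁱ → Aⁱ⁺¹`,
graded products, structure maps for the orbit category, and automorphism lifts `ψ`.
(`A i H` is the simplicial abelian group `Aⁱ(G/H)`.) -/
structure CartanPre (G : Type u) [Group G] : Type (u+1) where
  A : ℕ → Subgroup G → SData.{u}
  ab : ∀ i H n, AddCommGroup ((A i H).obj n)
  d : ∀ i H n, (A i H).obj n → (A (i+1) H).obj n
  map : ∀ (i : ℕ) (H K : Subgroup G) (g : G), SubConj g H K →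
    ∀ n, (A i K).obj n → (A i H).obj n
  mul : ∀ (i j : ℕ) (H : Subgroup G) (n : ℕ),
    (A i H).obj n → (A j H).obj n → (A (i+j) H).obj n
  ψ : ∀ (i : ℕ) (H : Subgroup G),
    ({m : (A 0 H).obj 0 // d 0 H 0 m = 0} → {m : (A 0 H).obj 0 // d 0 H 0 m = 0}) →
    ∀ n, (A i H).obj n → (A i H).obj n

attribute [instance] CartanPre.ab

namespace CartanPre

variable {G : Type u} [Group G]

/-- `M = (Z⁰𝒜)₀(G/H)`: the degree-`0` part of the kernel of `δ⁰`. -/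
def M (C : CartanPre G) (H : Subgroup G) : Type u :=
  {m : (C.A 0 H).obj 0 // C.d 0 H 0 m = 0}

/-- Transport along an equality of cohomological degrees. -/
def castA (C : CartanPre G) {H : Subgroup G} {n : ℕ} {i i' : ℕ} (h : i = i')
    (x : (C.A i H).obj n) : (C.A i' H).obj n := h ▸ x

/-- Additivity of a self-map of `M(G/H)` (expressed on underlying elements, so that no
group structure on the subtype is pre-supposed). -/
def AddCompat (C : CartanPre G) {H : Subgroup G} (α : C.M H → C.M H) : Prop :=
  ∀ x y z : C.M H, z.1 = x.1 + y.1 → (α z).1 = (α x).1 + (α y).1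

/-- Being an automorphism of the abelian group `M(G/H)`. -/
def IsAutM (C : CartanPre G) {H : Subgroup G} (α : C.M H → C.M H) : Prop :=
  Function.Bijective α ∧ C.AddCompat α

end CartanPre

/-- The axioms of an equivariant twisted Cartan cohomology theory (Definition 4.1):
each `𝒜(G/H)` is a simplicial differential graded algebra over `ℤ`, each degreewise
complex is exact in abelian `O_G`-groups, all homotopy groups of each `Aⁱ` vanish,
`Z⁰𝒜 = ker δ⁰` is simplicially trivial, and there are compatible automorphism lifts
`ψ_H : Aut((Z⁰𝒜)₀(G/H)) → Aut_{SG}(Aⁱ(G/H))`. -/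
structure IsCartan {G : Type u} [Group G] (C : CartanPre G) : Prop where
  simp : ∀ i H, (C.A i H).IsSimplicial
  δ_add : ∀ i H n j (x y : (C.A i H).obj (n+1)),
    (C.A i H).δ n j (x + y) = (C.A i H).δ n j x + (C.A i H).δ n j y
  σ_add : ∀ i H n j (x y : (C.A i H).obj n),
    (C.A i H).σ n j (x + y) = (C.A i H).σ n j x + (C.A i H).σ n j y
  d_add : ∀ i H n (x y : (C.A i H).obj n), C.d i H n (x + y) = C.d i H n x + C.d i H n y
  d_d : ∀ i H n (x : (C.A i H).obj n), C.d (i+1) H n (C.d i H n x) = 0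
  d_δ : ∀ i H n j (x : (C.A i H).obj (n+1)),
    C.d i H n ((C.A i H).δ n j x) = (C.A (i+1) H).δ n j (C.d i H (n+1) x)
  d_σ : ∀ i H n j (x : (C.A i H).obj n),
    C.d i H (n+1) ((C.A i H).σ n j x) = (C.A (i+1) H).σ n j (C.d i H n x)
  map_add : ∀ i (H K : Subgroup G) g (hg : SubConj g H K) n (x y : (C.A i K).obj n),
    C.map i H K g hg n (x + y) = C.map i H K g hg n x + C.map i H K g hg n y
  map_δ : ∀ i (H K : Subgroup G) g (hg : SubConj g H K) n j (x : (C.A i K).obj (n+1)),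
    C.map i H K g hg n ((C.A i K).δ n j x) = (C.A i H).δ n j (C.map i H K g hg (n+1) x)
  map_σ : ∀ i (H K : Subgroup G) g (hg : SubConj g H K) n j (x : (C.A i K).obj n),
    C.map i H K g hg (n+1) ((C.A i K).σ n j x) = (C.A i H).σ n j (C.map i H K g hg n x)
  map_d : ∀ i (H K : Subgroup G) g (hg : SubConj g H K) n (x : (C.A i K).obj n),
    C.map (i+1) H K g hg n (C.d i K n x) = C.d i H n (C.map i H K g hg n x)
  map_id : ∀ i (H : Subgroup G) n (x : (C.A i H).obj n),
    C.map i H H 1 (SubConj.one H) n x = x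
  map_comp : ∀ i (H K L : Subgroup G) g k (hg : SubConj g H K) (hk : SubConj k K L)
    n (x : (C.A i L).obj n),
    C.map i H L (g*k) (hg.comp hk) n x = C.map i H K g hg n (C.map i K L k hk n x)
  map_coset : ∀ i (H K : Subgroup G) (g g' : G) (hg : SubConj g H K)
    (hg' : SubConj g' H K), g⁻¹ * g' ∈ K →
    ∀ n (x : (C.A i K).obj n), C.map i H K g hg n x = C.map i H K g' hg' n x
  -- exactness of each degreewise complex:
  exact' : ∀ i H n (x : (C.A (i+1) H).obj n),
    C.d (i+1) H n x = 0 → ∃ y : (C.A i H).obj n, C.d i H n y = x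
  -- all homotopy groups of each `Aⁱ(G/H)` vanish:
  pi0 : ∀ i H (x : (C.A i H).obj 0),
    ∃ y : (C.A i H).obj 1, (C.A i H).δ 0 0 y = x ∧ (C.A i H).δ 0 1 y = 0
  htpy : ∀ i H n (x : (C.A i H).obj (n+1)), (∀ j ≤ n+1, (C.A i H).δ n j x = 0) →
    ∃ y : (C.A i H).obj (n+2), (C.A i H).δ (n+1) 0 y = x ∧
      ∀ j, 1 ≤ j → j ≤ n+2 → (C.A i H).δ (n+1) j y = 0
  -- `Z⁰𝒜` is simplicially trivial:
  z0_δ_inj : ∀ H n j, j ≤ n+1 → ∀ x y : (C.A 0 H).obj (n+1),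
    C.d 0 H (n+1) x = 0 → C.d 0 H (n+1) y = 0 →
    (C.A 0 H).δ n j x = (C.A 0 H).δ n j y → x = y
  z0_δ_surj : ∀ H n j, j ≤ n+1 → ∀ z : (C.A 0 H).obj n, C.d 0 H n z = 0 →
    ∃ x : (C.A 0 H).obj (n+1), C.d 0 H (n+1) x = 0 ∧ (C.A 0 H).δ n j x = z
  z0_σ_inj : ∀ H n j, j ≤ n → ∀ x y : (C.A 0 H).obj n,
    C.d 0 H n x = 0 → C.d 0 H n y = 0 →
    (C.A 0 H).σ n j x = (C.A 0 H).σ n j y → x = y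
  z0_σ_surj : ∀ H n j, j ≤ n → ∀ z : (C.A 0 H).obj (n+1), C.d 0 H (n+1) z = 0 →
    ∃ x : (C.A 0 H).obj n, C.d 0 H n x = 0 ∧ (C.A 0 H).σ n j x = z
  -- the graded product makes each `𝒜(G/H)` a simplicial DGA over `ℤ`:
  mul_add_l : ∀ i j H n (a a' : (C.A i H).obj n) (b : (C.A j H).obj n),
    C.mul i j H n (a + a') b = C.mul i j H n a b + C.mul i j H n a' b
  mul_add_r : ∀ i j H n (a : (C.A i H).obj n) (b b' : (C.A j H).obj n),
    C.mul i j H n a (b + b') = C.mul i j H n a b + C.mul i j H n a b'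
  mul_assoc' : ∀ i j k H n (a : (C.A i H).obj n) (b : (C.A j H).obj n)
    (c : (C.A k H).obj n),
    C.mul (i+j) k H n (C.mul i j H n a b) c =
      C.castA (by omega) (C.mul i (j+k) H n a (C.mul j k H n b c))
  mul_δ : ∀ i j H n l (a : (C.A i H).obj (n+1)) (b : (C.A j H).obj (n+1)),
    (C.A (i+j) H).δ n l (C.mul i j H (n+1) a b) =
      C.mul i j H n ((C.A i H).δ n l a) ((C.A j H).δ n l b)
  mul_σ : ∀ i j H n l (a : (C.A i H).obj n) (b : (C.A j H).obj n),
    (C.A (i+j) H).σ n l (C.mul i j H n a b) =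
      C.mul i j H (n+1) ((C.A i H).σ n l a) ((C.A j H).σ n l b)
  leibniz : ∀ i j H n (a : (C.A i H).obj n) (b : (C.A j H).obj n),
    C.d (i+j) H n (C.mul i j H n a b) =
      C.castA (by omega) (C.mul (i+1) j H n (C.d i H n a) b) +
      ((-1 : ℤ)^i) • C.castA (by omega) (C.mul i (j+1) H n a (C.d j H n b))
  -- the automorphism lifts `ψ` (the fifth axiom):
  ψ_id : ∀ i H n (x : (C.A i H).obj n), C.ψ i H id n x = x
  ψ_comp : ∀ i H (α β : C.M H → C.M H), C.IsAutM α → C.IsAutM β →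
    ∀ n (x : (C.A i H).obj n), C.ψ i H (α ∘ β) n x = C.ψ i H α n (C.ψ i H β n x)
  ψ_add : ∀ i H (α : C.M H → C.M H), C.IsAutM α →
    ∀ n (x y : (C.A i H).obj n), C.ψ i H α n (x + y) = C.ψ i H α n x + C.ψ i H α n y
  ψ_bij : ∀ i H (α : C.M H → C.M H), C.IsAutM α → ∀ n, Function.Bijective (C.ψ i H α n)
  ψ_δ : ∀ i H (α : C.M H → C.M H), C.IsAutM α → ∀ n j (x : (C.A i H).obj (n+1)),
    C.ψ i H α n ((C.A i H).δ n j x) = (C.A i H).δ n j (C.ψ i H α (n+1) x)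
  ψ_σ : ∀ i H (α : C.M H → C.M H), C.IsAutM α → ∀ n j (x : (C.A i H).obj n),
    C.ψ i H α (n+1) ((C.A i H).σ n j x) = (C.A i H).σ n j (C.ψ i H α n x)
  ψ_d : ∀ i H (α : C.M H → C.M H), C.IsAutM α → ∀ n (x : (C.A i H).obj n),
    C.d i H n (C.ψ i H α n x) = C.ψ (i+1) H α n (C.d i H n x)
  ψ_nat : ∀ i (H K : Subgroup G) g (hg : SubConj g H K)
    (α : C.M H → C.M H) (β : C.M K → C.M K), C.IsAutM α → C.IsAutM β →
    (∀ (x : C.M K) (y : C.M H), y.1 = C.map 0 H K g hg 0 x.1 →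
      (α y).1 = C.map 0 H K g hg 0 (β x).1) →
    ∀ n (z : (C.A i K).obj n),
      C.ψ i H α n (C.map i H K g hg n z) = C.map i H K g hg n (C.ψ i K β n z)

section Lifts

variable {G : Type u} [Group G]

/-- The objectwise twisted cartesian product `Aⁱ ×_{τ(π̲)} W̄π̲` over `G/H`, where `π̲`
acts on `Aⁱ` via `ψ ∘ φ`. -/
def TCPA (C : CartanPre G) (π : OGGrp G)
    (φ : ∀ H : Subgroup G, π.obj H → C.M H → C.M H) (i : ℕ) (H : Subgroup G) :
    SData.{u} :=
  TCP (C.A i H) (Wbar (π.obj H)) (constS (π.obj H))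
    (fun q u a => C.ψ i H (φ H u) q a) (tauW (π.obj H))

/-- `A_φⁱ(X;τ)`: the property of being a lift of `θ(τ)` along
`p : Aⁱ ×_{τ(π̲)} W̄π̲ → W̄π̲`, natural in `G/H`. -/
def IsLift (C : CartanPre G) (Y : GSData G) (π : OGGrp G)
    (τ : ∀ (H : Subgroup G) q, (Y.Fixed H).obj (q+1) → π.obj H)
    (φ : ∀ H : Subgroup G, π.obj H → C.M H → C.M H) (i : ℕ)
    (f : ∀ (H : Subgroup G) q, (Y.Fixed H).obj q →
      ((C.A i H).obj q × (Wbar (π.obj H)).obj q)) : Prop :=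
  -- it is a lift of `θ(τ)`:
  (∀ (H : Subgroup G) q (x : (Y.Fixed H).obj q),
    (f H q x).2 = thetaF (Y.Fixed H) (π.obj H) (τ H) q x) ∧
  -- it is a simplicial map into the twisted cartesian product:
  (∀ (H : Subgroup G) q j, j ≤ q + 1 → ∀ x : (Y.Fixed H).obj (q+1),
    f H q ((Y.Fixed H).δ q j x) = (TCPA C π φ i H).δ q j (f H (q+1) x)) ∧
  (∀ (H : Subgroup G) q j, j ≤ q → ∀ x : (Y.Fixed H).obj q,
    f H (q+1) ((Y.Fixed H).σ q j x) = (TCPA C π φ i H).σ q j (f H q x)) ∧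
  -- it is natural in `G/H`:
  (∀ (H K : Subgroup G) (g : G) (hg : SubConj g H K) q (x : (Y.Fixed K).obj q),
    f H q (Y.fmap g hg q x) =
      (C.map i H K g hg q (f K q x).1, fun j => π.map H K g hg ((f K q x).2 j)))

/-- Fibrewise addition of lifts. -/
def addF (C : CartanPre G) (Y : GSData G) (π : OGGrp G) (i : ℕ)
    (f f' : ∀ (H : Subgroup G) q, (Y.Fixed H).obj q →
      ((C.A i H).obj q × (Wbar (π.obj H)).obj q)) :
    ∀ (H : Subgroup G) q, (Y.Fixed H).obj q →
      ((C.A i H).obj q × (Wbar (π.obj H)).obj q) :=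
  fun H q x => ((f H q x).1 + (f' H q x).1, (f H q x).2)

/-- Fibrewise negation of lifts. -/
def negF (C : CartanPre G) (Y : GSData G) (π : OGGrp G) (i : ℕ)
    (f : ∀ (H : Subgroup G) q, (Y.Fixed H).obj q →
      ((C.A i H).obj q × (Wbar (π.obj H)).obj q)) :
    ∀ (H : Subgroup G) q, (Y.Fixed H).obj q →
      ((C.A i H).obj q × (Wbar (π.obj H)).obj q) :=
  fun H q x => (-(f H q x).1, (f H q x).2)

/-- The trivial (zero) lift. -/
def zeroF (C : CartanPre G) (Y : GSData G) (π : OGGrp G)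
    (τ : ∀ (H : Subgroup G) q, (Y.Fixed H).obj (q+1) → π.obj H) (i : ℕ) :
    ∀ (H : Subgroup G) q, (Y.Fixed H).obj q →
      ((C.A i H).obj q × (Wbar (π.obj H)).obj q) :=
  fun H q x => (0, thetaF (Y.Fixed H) (π.obj H) (τ H) q x)

/-- The differential `δ̄` on lifts, induced by `δⁱ` on the first coordinate. -/
def dF (C : CartanPre G) (Y : GSData G) (π : OGGrp G) (i : ℕ)
    (f : ∀ (H : Subgroup G) q, (Y.Fixed H).obj q →
      ((C.A i H).obj q × (Wbar (π.obj H)).obj q)) :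
    ∀ (H : Subgroup G) q, (Y.Fixed H).obj q →
      ((C.A (i+1) H).obj q × (Wbar (π.obj H)).obj q) :=
  fun H q x => (C.d i H q (f H q x).1, (f H q x).2)

end Lifts

/-- The product `X × Δ[1]` of a simplicial set with the standard `1`-simplex
(`Δ[1]_q` = monotone maps `Fin (q+1) → Fin 2`). -/
def prodD1 (X : SData.{u}) : SData.{u} where
  obj q := X.obj q × (Fin (q+1) →o Fin 2)
  δ q j p :=
    (X.δ q j p.1,
     ⟨fun t => p.2 ((⟨min j (q+1), by omega⟩ : Fin (q+2)).succAbove t),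
      fun a b h => p.2.mono ((Fin.strictMono_succAbove _).monotone h)⟩)
  σ q j p :=
    (X.σ q j p.1,
     ⟨fun t => p.2 ((⟨min j q, by omega⟩ : Fin (q+1)).predAbove t),
      fun a b h => p.2.mono (Fin.predAbove_right_monotone _ h)⟩)

/-- The constant vertex `ε` of `Δ[1]`, as a `q`-simplex. -/
def constD1 (q : ℕ) (ε : Fin 2) : Fin (q+1) →o Fin 2 := ⟨fun _ => ε, monotone_const⟩

/-! The first claim holds because `δ̄` only acts on the first coordinate. For rigidity, a
vertical homotopy restricted to a vertex `x` is a `1`-simplex of `Z⁰𝒜 ×_{τ(π̲)} W̄π̲` over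
the degenerate edge `s₀x`; its twist `τ(s₀x)` is trivial, and every `1`-simplex of the
simplicially trivial `Z⁰𝒜` is degenerate, so both ends of the homotopy agree on vertices.
The face maps of `Z⁰𝒜` are injective, so agreement on vertices propagates to all degrees. -/

lemma GSData.isSimplicial_fixed {G : Type u} [Group G] (Y : GSData G) (H : Subgroup G) :
    (Y.Fixed H).IsSimplicial where
  δδ n i j hij hj x := Subtype.ext (Y.simp.δδ n i j hij hj x.1)
  σσ n i j hij hj x := Subtype.ext (Y.simp.σσ n i j hij hj x.1)
  δσ_lt n i j hij hj x := Subtype.ext (Y.simp.δσ_lt n i j hij hj x.1)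
  δσ_self n j hj x := Subtype.ext (Y.simp.δσ_self n j hj x.1)
  δσ_succ n j hj x := Subtype.ext (Y.simp.δσ_succ n j hj x.1)
  δσ_gt n i j hij hj x := Subtype.ext (Y.simp.δσ_gt n i j hij hj x.1)

section ProdD1

variable {X : SData.{u}}

lemma prodD1_δ_zero_degenerate_edge (hX : X.IsSimplicial) (x : X.obj 0) :
    (prodD1 X).δ 0 0 ((X.σ 0 0 x, OrderHom.id) : (prodD1 X).obj 1) = (x, constD1 0 1) := by
  refine Prod.ext (hX.δσ_self 0 0 le_rfl x) (DFunLike.ext _ _ fun t => ?_)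
  fin_cases t
  rfl

lemma prodD1_δ_one_degenerate_edge (hX : X.IsSimplicial) (x : X.obj 0) :
    (prodD1 X).δ 0 1 ((X.σ 0 0 x, OrderHom.id) : (prodD1 X).obj 1) = (x, constD1 0 0) := by
  refine Prod.ext (hX.δσ_succ 0 0 le_rfl x) (DFunLike.ext _ _ fun t => ?_)
  fin_cases t
  rfl

end ProdD1

lemma TCP_δ_of_ne_zero {F B Γ : SData.{u}} (act : ∀ n, Γ.obj n → F.obj n → F.obj n)
    (τ : ∀ q, B.obj (q+1) → Γ.obj q) {n i : ℕ} (p : (TCP F B Γ act τ).obj (n+1)) (hi : i ≠ 0) :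
    (TCP F B Γ act τ).δ n i p = (F.δ n i p.1, B.δ n i p.2) :=
  if_neg hi (t := (act n (τ n p.2) (F.δ n 0 p.1), B.δ n 0 p.2))

section TCPA

variable {G : Type u} [Group G] {C : CartanPre G} {π : OGGrp G}
  {φ : ∀ H : Subgroup G, π.obj H → C.M H → C.M H} {i : ℕ} {H : Subgroup G} {n : ℕ}
  (e : (TCPA C π φ i H).obj (n+1))

lemma TCPA_δ_zero : (TCPA C π φ i H).δ n 0 e =
    (C.ψ i H (φ H (e.2 0)) n ((C.A i H).δ n 0 e.1), (Wbar (π.obj H)).δ n 0 e.2) :=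
  rfl

lemma TCPA_δ_of_ne_zero {j : ℕ} (hj : j ≠ 0) :
    (TCPA C π φ i H).δ n j e = ((C.A i H).δ n j e.1, (Wbar (π.obj H)).δ n j e.2) :=
  TCP_δ_of_ne_zero _ _ e hj

end TCPA

namespace IsCartan

variable {G : Type u} [Group G] {C : CartanPre G}

lemma δ_zero_eq_δ_one_of_d_eq_zero (hC : IsCartan C) {H : Subgroup G} {n : ℕ}
    {a : (C.A 0 H).obj (n+1)} (ha : C.d 0 H (n+1) a = 0) :
    (C.A 0 H).δ n 0 a = (C.A 0 H).δ n 1 a := by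
  obtain ⟨b, -, rfl⟩ := hC.z0_σ_surj H n 0 (Nat.zero_le n) a ha
  rw [(hC.simp 0 H).δσ_self n 0 (Nat.zero_le n) b,
    (hC.simp 0 H).δσ_succ n 0 (Nat.zero_le n) b]

lemma fst_TCPA_δ_zero_eq_δ_one (hC : IsCartan C) {π : OGGrp G}
    {φ : ∀ H : Subgroup G, π.obj H → C.M H → C.M H} {H : Subgroup G}
    (hφ_one : ∀ m, φ H 1 m = m) {e : (TCPA C π φ 0 H).obj 1}
    (he : C.d 0 H 1 e.1 = 0) (hu : e.2 0 = 1) :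
    ((TCPA C π φ 0 H).δ 0 0 e).1 = ((TCPA C π φ 0 H).δ 0 1 e).1 := by
  have hφ : φ H 1 = id := funext hφ_one
  rw [TCPA_δ_zero, TCPA_δ_of_ne_zero _ one_ne_zero, hu, hφ]
  exact (hC.ψ_id 0 H 0 _).trans (hC.δ_zero_eq_δ_one_of_d_eq_zero he)

lemma fst_verticalHomotopy_vertex_eq (hC : IsCartan C) {π : OGGrp G}
    {φ : ∀ H : Subgroup G, π.obj H → C.M H → C.M H} {H : Subgroup G}
    (hφ_one : ∀ m, φ H 1 m = m) {X : SData.{u}} (hX : X.IsSimplicial)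
    {τ : ∀ q, X.obj (q+1) → π.obj H} (hτ : ∀ x, τ 0 (X.σ 0 0 x) = 1)
    {F : ∀ q, (prodD1 X).obj q → ((C.A 0 H).obj q × (Wbar (π.obj H)).obj q)}
    (hF0 : ∀ q p, C.d 0 H q (F q p).1 = 0) (hFθ : ∀ q p, (F q p).2 = thetaF X (π.obj H) τ q p.1)
    (hFδ : ∀ q j, j ≤ q + 1 → ∀ p : (prodD1 X).obj (q+1),
      F q ((prodD1 X).δ q j p) = (TCPA C π φ 0 H).δ q j (F (q+1) p))
    (x : X.obj 0) : (F 0 (x, constD1 0 0)).1 = (F 0 (x, constD1 0 1)).1 := by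
  set p : (prodD1 X).obj 1 := (X.σ 0 0 x, OrderHom.id)
  have hu : (F 1 p).2 0 = 1 := by rw [hFθ]; exact hτ x
  have hend₀ := hFδ 0 1 le_rfl p
  have hend₁ := hFδ 0 0 (Nat.zero_le _) p
  rw [prodD1_δ_one_degenerate_edge hX] at hend₀
  rw [prodD1_δ_zero_degenerate_edge hX] at hend₁
  rw [hend₀, hend₁]
  exact (hC.fst_TCPA_δ_zero_eq_δ_one hφ_one (hF0 1 p) hu).symm

end IsCartan

section Lifts

variable {G : Type u} [Group G] {C : CartanPre G} {Y : GSData G} {π : OGGrp G}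
  {τ : ∀ (H : Subgroup G) q, (Y.Fixed H).obj (q+1) → π.obj H}
  {φ : ∀ H : Subgroup G, π.obj H → C.M H → C.M H}

lemma dF_eq_zeroF_iff {i : ℕ}
    {f : ∀ (H : Subgroup G) q, (Y.Fixed H).obj q → ((C.A i H).obj q × (Wbar (π.obj H)).obj q)}
    (hf : ∀ H q x, (f H q x).2 = thetaF (Y.Fixed H) (π.obj H) (τ H) q x) :
    dF C Y π i f = zeroF C Y π τ (i+1) ↔ ∀ H q x, C.d i H q (f H q x).1 = 0 := by
  refine ⟨fun h H q x => congrArg Prod.fst (congrFun₃ h H q x), fun h => ?_⟩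
  funext H q x
  exact Prod.ext (h H q x) (hf H q x)

lemma IsLift.eq_of_d_eq_zero_of_fst_vertex_eq (hC : IsCartan C)
    {f g : ∀ (H : Subgroup G) q, (Y.Fixed H).obj q → ((C.A 0 H).obj q × (Wbar (π.obj H)).obj q)}
    (hf : IsLift C Y π τ φ 0 f) (hg : IsLift C Y π τ φ 0 g)
    (hf0 : ∀ H q x, C.d 0 H q (f H q x).1 = 0) (hg0 : ∀ H q x, C.d 0 H q (g H q x).1 = 0)
    (hvert : ∀ H x, (f H 0 x).1 = (g H 0 x).1) : f = g := by
  have hfst : ∀ q H x, (f H q x).1 = (g H q x).1 := by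
    intro q
    induction q with
    | zero => exact hvert
    | succ n ih =>
      intro H x
      have hface : ∀ {k} (hk : IsLift C Y π τ φ 0 k),
          (k H n ((Y.Fixed H).δ n 1 x)).1 = (C.A 0 H).δ n 1 (k H (n+1) x).1 := fun hk =>
        congrArg Prod.fst ((hk.2.1 H n 1 (by omega) x).trans (TCPA_δ_of_ne_zero _ one_ne_zero))
      refine hC.z0_δ_inj H n 1 (by omega) _ _ (hf0 H (n+1) x) (hg0 H (n+1) x) ?_
      rw [← hface hf, ← hface hg, ih]
  funext H q x
  exact Prod.ext (hfst q H x) ((hf.1 H q x).trans (hg.1 H q x).symm)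

end Lifts

theorem degree_zero_lifts_general {G : Type u} [Group G]
    (C : CartanPre G) (hC : IsCartan C) (Y : GSData G) (π : OGGrp G)
    (τ : ∀ (H : Subgroup G) q, (Y.Fixed H).obj (q+1) → π.obj H)
    (hτ : ∀ H : Subgroup G,
      @IsTwisting (Y.Fixed H) (constS (π.obj H))
        (fun _ => inferInstanceAs (Group (π.obj H))) (τ H))
    (φ : ∀ H : Subgroup G, π.obj H → C.M H → C.M H)
    (hφ_one : ∀ H m, φ H 1 m = m) :
    -- `H⁰ = ker δ̄⁰` consists exactly of the lifts with values in `Z⁰𝒜`: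
    (∀ f, IsLift C Y π τ φ 0 f →
      (dF C Y π 0 f = zeroF C Y π τ 1 ↔
        ∀ (H : Subgroup G) q (x : (Y.Fixed H).obj q), C.d 0 H q (f H q x).1 = 0)) ∧
    -- rigidity: two vertically homotopic lifts into `Z⁰𝒜 ×_{τ(π̲)} W̄π̲` are equal:
    (∀ f g, IsLift C Y π τ φ 0 f → IsLift C Y π τ φ 0 g →
      (∀ (H : Subgroup G) q (x : (Y.Fixed H).obj q), C.d 0 H q (f H q x).1 = 0) →
      (∀ (H : Subgroup G) q (x : (Y.Fixed H).obj q), C.d 0 H q (g H q x).1 = 0) →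
      ∀ F : ∀ (H : Subgroup G) q,
        (prodD1 (Y.Fixed H)).obj q → ((C.A 0 H).obj q × (Wbar (π.obj H)).obj q),
      -- `F` is a vertical homotopy through `Z⁰𝒜 ×_{τ(π̲)} W̄π̲` from `f` to `g`:
      (∀ (H : Subgroup G) q (p : (prodD1 (Y.Fixed H)).obj q),
        C.d 0 H q (F H q p).1 = 0) →
      (∀ (H : Subgroup G) q (p : (prodD1 (Y.Fixed H)).obj q),
        (F H q p).2 = thetaF (Y.Fixed H) (π.obj H) (τ H) q p.1) →
      (∀ (H : Subgroup G) q j, j ≤ q + 1 → ∀ p : (prodD1 (Y.Fixed H)).obj (q+1),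
        F H q ((prodD1 (Y.Fixed H)).δ q j p) = (TCPA C π φ 0 H).δ q j (F H (q+1) p)) →
      (∀ (H : Subgroup G) q j, j ≤ q → ∀ p : (prodD1 (Y.Fixed H)).obj q,
        F H (q+1) ((prodD1 (Y.Fixed H)).σ q j p) = (TCPA C π φ 0 H).σ q j (F H q p)) →
      (∀ (H K : Subgroup G) (g' : G) (hg : SubConj g' H K) q
          (p : (prodD1 (Y.Fixed K)).obj q),
        F H q (Y.fmap g' hg q p.1, p.2) =
          (C.map 0 H K g' hg q (F K q p).1, fun j => π.map H K g' hg ((F K q p).2 j))) →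
      (∀ (H : Subgroup G) q (x : (Y.Fixed H).obj q),
        F H q (x, constD1 q 0) = f H q x) →
      (∀ (H : Subgroup G) q (x : (Y.Fixed H).obj q),
        F H q (x, constD1 q 1) = g H q x) →
      f = g) := by
  refine ⟨fun f hf => dF_eq_zeroF_iff hf.1, ?_⟩
  intro f g hf hg hf0 hg0 F hF0 hFθ hFδ _ _ hFf hFg
  refine hf.eq_of_d_eq_zero_of_fst_vertex_eq hC hg hf0 hg0 fun H x => ?_
  rw [← hFf, ← hFg]
  exact hC.fst_verticalHomotopy_vertex_eq (hφ_one H) (Y.isSimplicial_fixed H) ((hτ H).s0 0)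
    (hF0 H) (hFθ H) (hFδ H) x

/-- Let `𝒜` be an equivariant twisted Cartan cohomology theory, `X` a
`G`-simplicial set, `τ : ΦX → π̲` an `O_G`-twisting function and `φ` a `π̲`-module
structure on `M = (Z⁰𝒜)₀`.  Then `H⁰` of the complex `(A_φ^*(X;τ), δ̄)` equals the set
of lifts of `θ(τ)` to `Z⁰𝒜 ×_{τ(π̲)} W̄π̲` (i.e. `δ̄⁰f = 0` iff `f` takes values in
`Z⁰𝒜`), and in degree `0` two such lifts are vertically homotopic iff they are equal. -/
theorem degree_zero_lifts {G : Type u} [Group G]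
    (C : CartanPre G) (hC : IsCartan C) (Y : GSData G) (π : OGGrp G)
    (τ : ∀ (H : Subgroup G) q, (Y.Fixed H).obj (q+1) → π.obj H)
    (hτ : ∀ H : Subgroup G,
      @IsTwisting (Y.Fixed H) (constS (π.obj H))
        (fun _ => inferInstanceAs (Group (π.obj H))) (τ H))
    (hτnat : ∀ (H K : Subgroup G) (g : G) (hg : SubConj g H K) q
      (x : (Y.Fixed K).obj (q+1)),
      τ H q (Y.fmap g hg (q+1) x) = π.map H K g hg (τ K q x))
    (φ : ∀ H : Subgroup G, π.obj H → C.M H → C.M H)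
    (hφ_one : ∀ H m, φ H 1 m = m)
    (hφ_mul : ∀ H u v m, φ H (u * v) m = φ H u (φ H v m))
    (hφ_aut : ∀ H u, C.IsAutM (φ H u)) :
    -- `H⁰ = ker δ̄⁰` consists exactly of the lifts with values in `Z⁰𝒜`:
    (∀ f, IsLift C Y π τ φ 0 f →
      (dF C Y π 0 f = zeroF C Y π τ 1 ↔
        ∀ (H : Subgroup G) q (x : (Y.Fixed H).obj q), C.d 0 H q (f H q x).1 = 0)) ∧
    -- rigidity: two vertically homotopic lifts into `Z⁰𝒜 ×_{τ(π̲)} W̄π̲` are equal: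
    (∀ f g, IsLift C Y π τ φ 0 f → IsLift C Y π τ φ 0 g →
      (∀ (H : Subgroup G) q (x : (Y.Fixed H).obj q), C.d 0 H q (f H q x).1 = 0) →
      (∀ (H : Subgroup G) q (x : (Y.Fixed H).obj q), C.d 0 H q (g H q x).1 = 0) →
      ∀ F : ∀ (H : Subgroup G) q,
        (prodD1 (Y.Fixed H)).obj q → ((C.A 0 H).obj q × (Wbar (π.obj H)).obj q),
      -- `F` is a vertical homotopy through `Z⁰𝒜 ×_{τ(π̲)} W̄π̲` from `f` to `g`:
      (∀ (H : Subgroup G) q (p : (prodD1 (Y.Fixed H)).obj q),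
        C.d 0 H q (F H q p).1 = 0) →
      (∀ (H : Subgroup G) q (p : (prodD1 (Y.Fixed H)).obj q),
        (F H q p).2 = thetaF (Y.Fixed H) (π.obj H) (τ H) q p.1) →
      (∀ (H : Subgroup G) q j, j ≤ q + 1 → ∀ p : (prodD1 (Y.Fixed H)).obj (q+1),
        F H q ((prodD1 (Y.Fixed H)).δ q j p) = (TCPA C π φ 0 H).δ q j (F H (q+1) p)) →
      (∀ (H : Subgroup G) q j, j ≤ q → ∀ p : (prodD1 (Y.Fixed H)).obj q,
        F H (q+1) ((prodD1 (Y.Fixed H)).σ q j p) = (TCPA C π φ 0 H).σ q j (F H q p)) →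
      (∀ (H K : Subgroup G) (g' : G) (hg : SubConj g' H K) q
          (p : (prodD1 (Y.Fixed K)).obj q),
        F H q (Y.fmap g' hg q p.1, p.2) =
          (C.map 0 H K g' hg q (F K q p).1, fun j => π.map H K g' hg ((F K q p).2 j))) →
      (∀ (H : Subgroup G) q (x : (Y.Fixed H).obj q),
        F H q (x, constD1 q 0) = f H q x) →
      (∀ (H : Subgroup G) q (x : (Y.Fixed H).obj q),
        F H q (x, constD1 q 1) = g H q x) →
      f = g) :=
  degree_zero_lifts_general C hC Y π τ hτ φ hφ_one
end
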